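/- arXiv:2309.00546 — 4 statements merged into one kernel-verified Lean document; each statement's English description precedes it below -/
import Mathlib

section
/- For every positive integer n and every integer k with k > 3n²/8 − n/2 + 1/8, there exists a bichromatic convex point set P with n red and n blue points such that no straight-line bichromatic perfect matching on P has exactly k crossings. -/
open Finset

/-- Two closed-segment edges cross: their open segments (relative interiors) intersect. -/
def SegCross (a b c d : ℝ × ℝ) : Prop :=
  ∃ x : ℝ × ℝ, x ∈ openSegment ℝ a b ∧ x ∈ openSegment ℝ c d

/-- `f` is a straight-line bichromatic perfect matching on points indexed by `Fin m`
with coloring `c` (`true` = red, `false` = blue): it is a fixed-point-free involution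
matching points of different colors. -/
def IsBPM (m : ℕ) (c : Fin m → Bool) (f : Fin m → Fin m) : Prop :=
  Function.Involutive f ∧ (∀ i, f i ≠ i) ∧ (∀ i, c (f i) ≠ c i)

/-- Number of crossing pairs of edges of the matching `f` on the points `p`:
each edge is represented by its smaller endpoint. -/
noncomputable def crNum (m : ℕ) (p : Fin m → ℝ × ℝ) (f : Fin m → Fin m) : ℕ :=
  Nat.card {q : Fin m × Fin m // q.1 < q.2 ∧ q.1 < f q.1 ∧ q.2 < f q.2 ∧
    SegCross (p q.1) (p (f q.1)) (p q.2) (p (f q.2))}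

/-- The points `p 0, p 1, …` are distinct and in strictly convex position,
listed in clockwise order (every triple is negatively oriented). -/
def ConvexCW (m : ℕ) (p : Fin m → ℝ × ℝ) : Prop :=
  Function.Injective p ∧
  ∀ i j k : Fin m, (i : ℕ) < (j : ℕ) → (j : ℕ) < (k : ℕ) →
    ((p j).1 - (p i).1) * ((p k).2 - (p i).2) -
      ((p j).2 - (p i).2) * ((p k).1 - (p i).1) < 0

/-- The points are distinct and in general position: no three collinear. -/
def GenPos (m : ℕ) (p : Fin m → ℝ × ℝ) : Prop :=
  Function.Injective p ∧
  ∀ i j k : Fin m, i ≠ j → i ≠ k → j ≠ k →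
    ¬ Collinear ℝ ({p i, p j, p k} : Set (ℝ × ℝ))

/-- The coloring has exactly `n` red points (hence `n` blue points among the `2n`). -/
def Bichrom (n : ℕ) (c : Fin (2 * n) → Bool) : Prop :=
  (Finset.univ.filter fun i : Fin (2 * n) => c i = true).card = n

/-- The coloring alternates along the (cyclic) convex hull order. -/
def Alternating (m : ℕ) (c : Fin m → Bool) : Prop :=
  ∀ i j : Fin m, (j : ℕ) = ((i : ℕ) + 1) % m → c j ≠ c i

/-- The coloring is a 4-block coloring: starting at position `t` along the cyclic order,
there come `r1` red points, then `b1` blue, then `r2` red, then `b2` blue,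
all four blocks nonempty. -/
def FourBlockAt (n : ℕ) (c : Fin (2 * n) → Bool) (t : Fin (2 * n))
    (r1 b1 r2 b2 : ℕ) : Prop :=
  0 < r1 ∧ 0 < b1 ∧ 0 < r2 ∧ 0 < b2 ∧
  r1 + b1 + r2 + b2 = 2 * n ∧ r1 + r2 = n ∧
  ∀ j : Fin (2 * n), c (t + j) =
    if (j : ℕ) < r1 then true
    else if (j : ℕ) < r1 + b1 then false
    else if (j : ℕ) < r1 + b1 + r2 then true
    else false

/-- The coloring is a 4-block coloring (for some start and block sizes). -/
def FourBlock (n : ℕ) (c : Fin (2 * n) → Bool) : Prop :=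
  ∃ t r1 b1 r2 b2, FourBlockAt n c t r1 b1 r2 b2

/-- The coloring is a balanced 4-block coloring: any two block sizes differ by at most 1. -/
def Balanced4 (n : ℕ) (c : Fin (2 * n) → Bool) : Prop :=
  ∃ t r1 b1 r2 b2, FourBlockAt n c t r1 b1 r2 b2 ∧
    ∀ x ∈ [r1, b1, r2, b2], ∀ y ∈ [r1, b1, r2, b2], x ≤ y + 1

/-- The value `3n²/8 − n/2 + c` with `c` depending on `n mod 4`. -/
def maxCrBound (n : ℕ) : ℚ :=
  3 * (n : ℚ) ^ 2 / 8 - (n : ℚ) / 2 +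
    (if n % 4 = 0 then 0 else if n % 4 = 2 then -(1 / 2 : ℚ) else 1 / 8)

/-- `i` and `j` lie in the same monochromatic block: there is a cyclic arc from `i` to
`j` consisting of points of the color of `i`. -/
def SameBlockArc (m : ℕ) (c : Fin m → Bool) (i j : Fin m) : Prop :=
  ∃ d : Fin m, j = i + d ∧ ∀ e : Fin m, e ≤ d → c (i + e) = c i

noncomputable def pt (i : ℕ) : ℝ × ℝ := ((i:ℝ), -(i:ℝ)^2)



lemma seg_coords {i j : ℕ} {x : ℝ × ℝ} (h : x ∈ openSegment ℝ (pt i) (pt j)) :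
    ∃ u v : ℝ, 0 < u ∧ 0 < v ∧ u + v = 1 ∧
      x.1 = u * i + v * j ∧ x.2 = -(u * (i:ℝ)^2 + v * (j:ℝ)^2) := by
  obtain ⟨u, v, hu, hv, huv, hx⟩ := h
  refine ⟨u, v, hu, hv, huv, ?_, ?_⟩
  · have := congrArg Prod.fst hx
    simp [pt] at this
    linarith [this]
  · have := congrArg Prod.snd hx
    simp [pt] at this
    linarith [this]

lemma cross_lemma {i j k l : ℕ} (hij : i < j) (hkl : k < l) (hik : i < k)
    (hjk : j ≠ k) (hjl : j ≠ l)
    (h : SegCross (pt i) (pt j) (pt k) (pt l)) : k < j ∧ j < l := by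
  obtain ⟨x, h1, h2⟩ := h
  obtain ⟨u, v, hu, hv, huv, e1, e2⟩ := seg_coords h1
  obtain ⟨u', v', hu', hv', huv', e1', e2'⟩ := seg_coords h2
  have ri : (0:ℝ) ≤ i := Nat.cast_nonneg i
  have rij : (i:ℝ) < j := by exact_mod_cast hij
  have rkl : (k:ℝ) < l := by exact_mod_cast hkl
  have rik : (i:ℝ) < k := by exact_mod_cast hik
  have key : u' * (((k:ℝ) - i) * ((j:ℝ) - k)) * ((j:ℝ) - i)
      + v' * (((l:ℝ) - i) * ((j:ℝ) - l)) * ((j:ℝ) - i) = 0 := by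
    have d1 : u * (i:ℝ) + v * j = u' * k + v' * l := by rw [← e1, ← e1']
    have d2 : u * (i:ℝ)^2 + v * (j:ℝ)^2 = u' * (k:ℝ)^2 + v' * (l:ℝ)^2 := by
      have := e2.symm.trans e2'
      linarith [this]
    have hv1 : v = 1 - u := by linarith
    have hv1' : v' = 1 - u' := by linarith
    subst hv1 hv1'
    linear_combination (↑j - ↑i) * d2 + ((i:ℝ)^2 - (j:ℝ)^2) * d1
  by_contra hcon
  rw [not_and_or] at hcon
  rcases hcon with hc | hc
  · -- j ≤ k, hence j < k since j ≠ k : i < j < k < l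
    have hjk' : (j:ℝ) < k := by
      have : j < k := lt_of_le_of_ne (not_lt.mp hc) hjk
      exact_mod_cast this
    nlinarith [mul_pos hu' (mul_pos (mul_pos (sub_pos.2 rik) (sub_pos.2 (hjk'.trans_le (le_refl _)))) (sub_pos.2 rij)),
      mul_pos hu' hv', sub_pos.2 rij, sub_pos.2 rik]
  · have hlj : (l:ℝ) < j := by
      have : l < j := lt_of_le_of_ne (not_lt.mp hc) (Ne.symm hjl)
      exact_mod_cast this
    nlinarith [mul_pos (mul_pos hu' (mul_pos (sub_pos.2 rik) (sub_pos.2 (rkl.trans hlj)))) (sub_pos.2 rij),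
      mul_pos (mul_pos hv' (mul_pos (sub_pos.2 (rik.trans rkl)) (sub_pos.2 hlj))) (sub_pos.2 rij)]


lemma convexP (m : ℕ) : ConvexCW m (fun i => pt (i : ℕ)) := by
  constructor
  · intro i j h
    have : ((i:ℕ):ℝ) = ((j:ℕ):ℝ) := congrArg Prod.fst h
    have : (i:ℕ) = (j:ℕ) := by exact_mod_cast this
    exact Fin.ext this
  · intro i j k hij hjk
    have rij : ((i:ℕ):ℝ) < ((j:ℕ):ℝ) := by exact_mod_cast hij
    have rjk : ((j:ℕ):ℝ) < ((k:ℕ):ℝ) := by exact_mod_cast hjk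
    simp only [pt]
    nlinarith [mul_pos (mul_pos (sub_pos.2 rij) (sub_pos.2 (rij.trans rjk))) (sub_pos.2 rjk)]

lemma bichrom_count (n a b : ℕ) (hab : a + b = n) :
    (Finset.univ.filter fun i : Fin (2*n) =>
      (decide ((i:ℕ) < a ∨ (a + a ≤ (i:ℕ) ∧ (i:ℕ) < a + a + b)) = true)).card = n := by
  have : (Finset.univ.filter fun i : Fin (2*n) =>
      (decide ((i:ℕ) < a ∨ (a + a ≤ (i:ℕ) ∧ (i:ℕ) < a + a + b)) = true)).card
      = ((Finset.range (2*n)).filter fun i => i < a ∨ (a + a ≤ i ∧ i < a + a + b)).card := by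
    rw [Finset.card_filter, Finset.card_filter, Fin.sum_univ_eq_sum_range (fun i => if (decide ((i:ℕ) < a ∨ (a + a ≤ (i:ℕ) ∧ (i:ℕ) < a + a + b)) = true) then 1 else 0)]
    apply Finset.sum_congr rfl
    intro i _
    by_cases h : i < a ∨ (a + a ≤ i ∧ i < a + a + b) <;> simp [h]
  rw [this]
  have : ((Finset.range (2*n)).filter fun i => i < a ∨ (a + a ≤ i ∧ i < a + a + b))
      = Finset.range a ∪ Finset.Ico (a+a) (a+a+b) := by
    ext i
    simp only [Finset.mem_filter, Finset.mem_range, Finset.mem_union, Finset.mem_Ico]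
    omega
  rw [this, Finset.card_union_of_disjoint]
  · rw [Finset.card_range, Nat.card_Ico]; omega
  · simp only [Finset.disjoint_left, Finset.mem_range, Finset.mem_Ico]
    intro x hx; omega


section helpers
variable {m : ℕ} (f : Fin m → Fin m)

lemma mem_image_inv (hinv : Function.Involutive f) (S : Finset (Fin m)) (j : Fin m) : j ∈ S.image f ↔ f j ∈ S := by
  simp only [Finset.mem_image]
  constructor
  · rintro ⟨x, hx, rfl⟩; rwa [hinv x]
  · intro h; exact ⟨f j, h, hinv j⟩

lemma card_lower (hinv : Function.Involutive f) (hfix : ∀ i, f i ≠ i) :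
    2 * (Finset.univ.filter fun i : Fin m => (i:ℕ) < (f i:ℕ)).card = m := by
  classical
  set E := Finset.univ.filter fun i : Fin m => (i:ℕ) < (f i:ℕ) with hE
  set E' := Finset.univ.filter fun i : Fin m => (f i:ℕ) < (i:ℕ) with hE'
  have hcard : E.card = E'.card := by
    apply Finset.card_bij (fun i _ => f i)
    · intro i hi
      simp only [hE, hE', Finset.mem_filter, Finset.mem_univ, true_and] at *
      rwa [hinv i]
    · intro i hi j hj h
      exact hinv.injective h
    · intro j hj
      simp only [hE, hE', Finset.mem_filter, Finset.mem_univ, true_and] at *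
      exact ⟨f j, by rwa [hinv j], hinv j⟩
  have hunion : E ∪ E' = Finset.univ := by
    ext i
    simp only [hE, hE', Finset.mem_union, Finset.mem_filter, Finset.mem_univ, true_and,
      iff_true]
    have : (f i : ℕ) ≠ (i : ℕ) := fun h => hfix i (Fin.ext h)
    omega
  have hdisj : Disjoint E E' := by
    simp only [Finset.disjoint_left, hE, hE', Finset.mem_filter, Finset.mem_univ, true_and]
    intro i h1 h2; omega
  have := Finset.card_union_of_disjoint hdisj
  rw [hunion, Finset.card_univ, Fintype.card_fin, hcard] at this
  omega

end helpers

lemma card_fin_filter (m : ℕ) (P : ℕ → Prop) [DecidablePred P] :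
    (Finset.univ.filter fun i : Fin m => P (i:ℕ)).card = ((Finset.range m).filter P).card := by
  rw [Finset.card_filter, Finset.card_filter,
    Fin.sum_univ_eq_sum_range (fun i => if P i then 1 else 0)]

lemma two_mul_card_lt (E : Finset (Fin m)) :
    2 * ((E ×ˢ E).filter fun q : Fin m × Fin m => (q.1:ℕ) < (q.2:ℕ)).card
      = E.card * E.card - E.card := by
  classical
  set TL := (E ×ˢ E).filter fun q : Fin m × Fin m => (q.1:ℕ) < (q.2:ℕ) with hTL
  set TG := (E ×ˢ E).filter fun q : Fin m × Fin m => (q.2:ℕ) < (q.1:ℕ) with hTG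
  have hcard : TL.card = TG.card := by
    apply Finset.card_bij (fun q _ => (q.2, q.1))
    · intro q hq
      simp only [hTL, hTG, Finset.mem_filter, Finset.mem_product] at *
      tauto
    · intro q hq q' hq' h
      simp only [Prod.ext_iff] at h ⊢
      tauto
    · intro q hq
      refine ⟨(q.2, q.1), ?_, rfl⟩
      simp only [hTL, hTG, Finset.mem_filter, Finset.mem_product] at *
      tauto
  have hunion : TL ∪ TG = E.offDiag := by
    ext q
    simp only [hTL, hTG, Finset.mem_union, Finset.mem_filter, Finset.mem_product,
      Finset.mem_offDiag]
    constructor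
    · rintro (⟨⟨h1, h2⟩, h3⟩ | ⟨⟨h1, h2⟩, h3⟩) <;>
        exact ⟨h1, h2, fun h => by rw [h] at h3; omega⟩
    · rintro ⟨h1, h2, h3⟩
      have hne : (q.1:ℕ) ≠ (q.2:ℕ) := fun h => h3 (Fin.ext h)
      rcases lt_or_gt_of_ne hne with h | h
      · exact Or.inl ⟨⟨h1, h2⟩, h⟩
      · exact Or.inr ⟨⟨h1, h2⟩, h⟩
  have hdisj : Disjoint TL TG := by
    simp only [Finset.disjoint_left, hTL, hTG, Finset.mem_filter, Finset.mem_product]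
    intro q h1 h2; omega
  have := Finset.card_union_of_disjoint hdisj
  rw [hunion, Finset.offDiag_card] at this
  omega

lemma int_consec (t : ℤ) : 0 ≤ t * (t - 1) := by
  rcases le_or_gt t 0 with h | h
  · nlinarith
  · have h1 : 1 ≤ t := h
    nlinarith

lemma main_count (n a b : ℕ) (hn : 0 < n) (hab : a + b = n) (hba : b ≤ a) (hal : a ≤ b + 1)
    (f : Fin (2*n) → Fin (2*n)) (hinv : Function.Involutive f) (hfix : ∀ i, f i ≠ i)
    (hc : ∀ i : Fin (2*n),
      (((f i : ℕ) < a ∨ (a + a ≤ (f i:ℕ) ∧ (f i:ℕ) < a+a+b)) ↔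
        ¬((i:ℕ) < a ∨ (a + a ≤ (i:ℕ) ∧ (i:ℕ) < a+a+b)))) :
    8 * (Finset.univ.filter fun q : Fin (2*n) × Fin (2*n) =>
        (q.1:ℕ) < (q.2:ℕ) ∧ (q.2:ℕ) < (f q.1:ℕ) ∧ (f q.1:ℕ) < (f q.2:ℕ)).card
      + 4 * n ≤ 3 * (n * n) + 1 := by
  classical
  have hm : a + a + b + b = 2 * n := by omega
  set E := Finset.univ.filter (fun i : Fin (2*n) => (i:ℕ) < (f i:ℕ)) with hE
  set X := Finset.univ.filter
    (fun i : Fin (2*n) => (i:ℕ) < a ∧ a ≤ (f i:ℕ) ∧ (f i:ℕ) < a+a) with hX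
  set Y := Finset.univ.filter
    (fun i : Fin (2*n) => (i:ℕ) < a ∧ a+a+b ≤ (f i:ℕ)) with hY
  set Z := Finset.univ.filter
    (fun i : Fin (2*n) => a ≤ (i:ℕ) ∧ (i:ℕ) < a+a ∧ a+a ≤ (f i:ℕ) ∧ (f i:ℕ) < a+a+b) with hZ
  set W := Finset.univ.filter
    (fun i : Fin (2*n) => a+a ≤ (i:ℕ) ∧ (i:ℕ) < a+a+b ∧ a+a+b ≤ (f i:ℕ)) with hW
  set T := Finset.univ.filter (fun q : Fin (2*n) × Fin (2*n) =>
      (q.1:ℕ) < (q.2:ℕ) ∧ (q.2:ℕ) < (f q.1:ℕ) ∧ (f q.1:ℕ) < (f q.2:ℕ)) with hT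
  set TL := (E ×ˢ E).filter (fun q : Fin (2*n) × Fin (2*n) => (q.1:ℕ) < (q.2:ℕ)) with hTL
  -- E has n elements
  have hEcard : E.card = n := by
    have := card_lower f hinv hfix
    rw [← hE] at this; omega
  have hTL2 : 2 * TL.card = n * n - n := by
    rw [hTL, two_mul_card_lt, hEcard]
  -- block counts
  have hXY : X.card + Y.card = a := by
    have hunion : X ∪ Y = Finset.univ.filter (fun i : Fin (2*n) => (i:ℕ) < a) := by
      ext i
      simp only [hX, hY, Finset.mem_union, Finset.mem_filter, Finset.mem_univ, true_and]
      have := hc i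
      have := i.isLt
      have := (f i).isLt
      omega
    have hdisj : Disjoint X Y := by
      simp only [Finset.disjoint_left, hX, hY, Finset.mem_filter, Finset.mem_univ, true_and]
      intro i h1 h2; omega
    have hcard : (Finset.univ.filter (fun i : Fin (2*n) => (i:ℕ) < a)).card = a := by
      rw [card_fin_filter (2*n) (fun i => i < a)]
      have : (Finset.range (2*n)).filter (fun i => i < a) = Finset.range a := by
        ext i
        simp only [Finset.mem_filter, Finset.mem_range]
        omega
      rw [this, Finset.card_range]
    rw [← Finset.card_union_of_disjoint hdisj, hunion, hcard]
  have hXZ : X.card + Z.card = a := by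
    have hunion : (X.image f) ∪ Z
        = Finset.univ.filter (fun i : Fin (2*n) => a ≤ (i:ℕ) ∧ (i:ℕ) < a+a) := by
      ext j
      rw [Finset.mem_union, mem_image_inv f hinv]
      simp only [hX, hZ, Finset.mem_filter, Finset.mem_univ, true_and, hinv j]
      have := hc j
      have := j.isLt
      have := (f j).isLt
      omega
    have hdisj : Disjoint (X.image f) Z := by
      simp only [Finset.disjoint_left, hZ, Finset.mem_filter, Finset.mem_univ, true_and]
      intro j h1 h2
      rw [mem_image_inv f hinv] at h1
      simp only [hX, Finset.mem_filter, Finset.mem_univ, true_and, hinv j] at h1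
      omega
    have hcard : (Finset.univ.filter
        (fun i : Fin (2*n) => a ≤ (i:ℕ) ∧ (i:ℕ) < a+a)).card = a := by
      rw [card_fin_filter (2*n) (fun i => a ≤ i ∧ i < a+a)]
      have : (Finset.range (2*n)).filter (fun i => a ≤ i ∧ i < a+a)
          = Finset.Ico a (a+a) := by
        ext i
        simp only [Finset.mem_filter, Finset.mem_range, Finset.mem_Ico]
        omega
      rw [this, Nat.card_Ico]; omega
    have := Finset.card_union_of_disjoint hdisj
    rw [hunion, hcard, Finset.card_image_of_injective X hinv.injective] at this
    omega
  have hYW : Y.card + W.card = b := by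
    have hunion : (Y.image f) ∪ (W.image f)
        = Finset.univ.filter (fun i : Fin (2*n) => a+a+b ≤ (i:ℕ)) := by
      ext j
      rw [Finset.mem_union, mem_image_inv f hinv, mem_image_inv f hinv]
      simp only [hY, hW, Finset.mem_filter, Finset.mem_univ, true_and, hinv j]
      have := hc j
      have := j.isLt
      have := (f j).isLt
      omega
    have hdisj : Disjoint (Y.image f) (W.image f) := by
      simp only [Finset.disjoint_left]
      intro j h1 h2
      rw [mem_image_inv f hinv] at h1 h2
      simp only [hY, hW, Finset.mem_filter, Finset.mem_univ, true_and, hinv j] at h1 h2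
      omega
    have hcard : (Finset.univ.filter
        (fun i : Fin (2*n) => a+a+b ≤ (i:ℕ))).card = b := by
      rw [card_fin_filter (2*n) (fun i => a+a+b ≤ i)]
      have : (Finset.range (2*n)).filter (fun i => a+a+b ≤ i)
          = Finset.Ico (a+a+b) (2*n) := by
        ext i
        simp only [Finset.mem_filter, Finset.mem_range, Finset.mem_Ico]
        omega
      rw [this, Nat.card_Ico]; omega
    have := Finset.card_union_of_disjoint hdisj
    rw [hunion, hcard, Finset.card_image_of_injective Y hinv.injective,
      Finset.card_image_of_injective W hinv.injective] at this
    omega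
  -- the union bound
  have hmain : T.card + (X.card * W.card + Y.card * Z.card) ≤ TL.card := by
    have hsub : T ∪ ((X ×ˢ W) ∪ (Y ×ˢ Z)) ⊆ TL := by
      intro q hq
      simp only [Finset.mem_union, hT, hX, hY, hZ, hW, Finset.mem_filter,
        Finset.mem_product, Finset.mem_univ, true_and] at hq
      simp only [hTL, hE, Finset.mem_filter, Finset.mem_product, Finset.mem_univ,
        true_and]
      omega
    have hd2 : Disjoint (X ×ˢ W) (Y ×ˢ Z) := by
      simp only [Finset.disjoint_left, hX, hY, hZ, hW, Finset.mem_product,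
        Finset.mem_filter, Finset.mem_univ, true_and]
      intro q h1 h2; omega
    have hd1 : Disjoint T ((X ×ˢ W) ∪ (Y ×ˢ Z)) := by
      simp only [Finset.disjoint_left, hT, hX, hY, hZ, hW, Finset.mem_union,
        Finset.mem_product, Finset.mem_filter, Finset.mem_univ, true_and]
      intro q h1 h2; omega
    calc T.card + (X.card * W.card + Y.card * Z.card)
        = (T ∪ ((X ×ˢ W) ∪ (Y ×ˢ Z))).card := by
          rw [Finset.card_union_of_disjoint hd1, Finset.card_union_of_disjoint hd2,
            Finset.card_product, Finset.card_product]
      _ ≤ TL.card := Finset.card_le_card hsub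
  -- integer arithmetic
  have key : (n:ℤ) * n ≤ 8 * ((X.card:ℤ) * W.card + (Y.card:ℤ) * Z.card) + 1 := by
    have e3 : (X.card:ℤ) + Y.card = a := by exact_mod_cast hXY
    have e4 : (X.card:ℤ) + Z.card = a := by exact_mod_cast hXZ
    have e5 : (Y.card:ℤ) + W.card = b := by exact_mod_cast hYW
    have en : (n:ℤ) = a + b := by exact_mod_cast hab.symm
    rcases (by omega : a = b ∨ a = b + 1) with h | h
    · have hba' : (a:ℤ) = b := by exact_mod_cast h
      nlinarith [sq_nonneg ((X.card:ℤ) - Y.card)]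
    · have hba' : (a:ℤ) = b + 1 := by exact_mod_cast h
      nlinarith [int_consec (2*(Y.card:ℤ) - b)]
  have hTcast : ((T.card:ℤ) + ((X.card:ℤ) * W.card + (Y.card:ℤ) * Z.card)) ≤ TL.card := by
    exact_mod_cast hmain
  have hTL2' : 2 * (TL.card:ℤ) = n * n - n := by
    have hnn : n ≤ n * n := Nat.le_mul_of_pos_left n hn
    have := hTL2
    omega
  have : 8 * (T.card:ℤ) + 4 * n ≤ 3 * ((n:ℤ) * n) + 1 := by linarith
  exact_mod_cast this


lemma crNum_le (n : ℕ) (f : Fin (2*n) → Fin (2*n)) (hinv : Function.Involutive f) :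
    crNum (2*n) (fun i => pt (i:ℕ)) f ≤ (Finset.univ.filter fun q : Fin (2*n) × Fin (2*n) =>
      (q.1:ℕ) < (q.2:ℕ) ∧ (q.2:ℕ) < (f q.1:ℕ) ∧ (f q.1:ℕ) < (f q.2:ℕ)).card := by
  classical
  rw [crNum, Nat.card_eq_fintype_card, Fintype.card_subtype]
  apply Finset.card_le_card
  intro q hq
  simp only [Finset.mem_filter, Finset.mem_univ, true_and] at *
  obtain ⟨h12, h1f, h2f, hseg⟩ := hq
  rw [Fin.lt_def] at h12 h1f h2f
  have hjk : (f q.1 : ℕ) ≠ (q.2:ℕ) := by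
    intro h
    have h' : f q.1 = q.2 := Fin.ext h
    have h'' : f q.2 = q.1 := by rw [← h', hinv]
    rw [h''] at h2f
    omega
  have hjl : (f q.1 : ℕ) ≠ (f q.2:ℕ) := by
    intro h
    have := hinv.injective (Fin.ext h)
    rw [this] at h12
    omega
  have := cross_lemma h1f h2f h12 hjk hjl hseg
  exact ⟨h12, this.1, this.2⟩


/-- For every positive integer `n` and every integer `k` with
`k > 3n²/8 − n/2 + 1/8`, there is a bichromatic convex point set with `n` red and
`n` blue points admitting no bichromatic perfect matching with exactly `k` crossings. -/
theorem stmt0 (n : ℕ) (hn : 0 < n) (k : ℕ)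
    (hk : (k : ℚ) > 3 * (n : ℚ) ^ 2 / 8 - (n : ℚ) / 2 + 1 / 8) :
    ∃ (p : Fin (2 * n) → ℝ × ℝ) (c : Fin (2 * n) → Bool),
      ConvexCW (2 * n) p ∧ Bichrom n c ∧
      ∀ f : Fin (2 * n) → Fin (2 * n), IsBPM (2 * n) c f →
        crNum (2 * n) p f ≠ k := by
  classical
  set a := (n+1)/2 with ha
  set b := n/2 with hb
  have hab : a + b = n := by omega
  have hba : b ≤ a := by omega
  have hal : a ≤ b + 1 := by omega
  refine ⟨fun i => pt (i:ℕ),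
    fun i => decide ((i:ℕ) < a ∨ (a+a ≤ (i:ℕ) ∧ (i:ℕ) < a+a+b)),
    convexP (2*n), bichrom_count n a b hab, ?_⟩
  intro f hf
  obtain ⟨hinv, hfix, hc⟩ := hf
  have hcol : ∀ i : Fin (2*n),
      (((f i : ℕ) < a ∨ (a + a ≤ (f i:ℕ) ∧ (f i:ℕ) < a+a+b)) ↔
        ¬((i:ℕ) < a ∨ (a + a ≤ (i:ℕ) ∧ (i:ℕ) < a+a+b))) := by
    intro i
    have := hc i
    simp only [ne_eq, decide_eq_decide] at this
    tauto
  have hmc := main_count n a b hn hab hba hal f hinv hfix hcol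
  have hle := crNum_le n f hinv
  have h1 : 8 * crNum (2*n) (fun i => pt (i:ℕ)) f + 4 * n ≤ 3 * (n*n) + 1 := by omega
  have h2 : (8 * (crNum (2*n) (fun i => pt (i:ℕ)) f : ℚ) + 4 * n) ≤ 3 * ((n:ℚ)*n) + 1 := by
    exact_mod_cast h1
  have hlt : ((crNum (2*n) (fun i => pt (i:ℕ)) f : ℚ)) < k := by nlinarith [hk]
  intro hEq
  rw [hEq] at hlt
  exact absurd hlt (lt_irrefl _)
end

section
/- Let P be a bichromatic convex point set with n red and n blue points that has a balanced 4-block coloring. Then the maximum of cr(M) over all straight-line bichromatic perfect matchings M on P equals 3n²/8 − n/2 if n ≡ 0 (mod 4), 3n²/8 − n/2 + 1/8 if n ≡ 1 (mod 4), 3n²/8 − n/2 − 1/2 if n ≡ 2 (mod 4), and 3n²/8 − n/2 + 1/8 if n ≡ 3 (mod 4). -/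
open Finset

/-!
Relabel cyclically so that the blocks are the intervals `[0, r1)`, `[r1, r1 + b1)`, … of
positions; this changes neither the convexity nor the number of crossings. On a convex point set
two chords cross exactly when their endpoints interleave. Classify the crossing pairs by the
blocks of the red endpoints of the two chords: pairs within one red block contribute at most
`r1.choose 2 + r2.choose 2`, and two chords from different red blocks can only cross when their
blue endpoints lie in the same blue block, giving at most `x z + y w` more pairs, where
`x, y, z, w` count the chords between the four pairs of red and blue blocks. Completing the square
in `x`, balance makes this at most `maxCrBound n`, and an explicit matching attains the bound.
-/

/-- Twice the signed area of the triangle `u v w`, negative iff the triangle is clockwise. -/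
def orient (u v w : ℝ × ℝ) : ℝ :=
  (v.1 - u.1) * (w.2 - u.2) - (v.2 - u.2) * (w.1 - u.1)

lemma orient_rotate (u v w : ℝ × ℝ) : orient u v w = orient v w u := by
  unfold orient; ring

lemma orient_swap (u v w : ℝ × ℝ) : orient u v w = -orient u w v := by
  unfold orient; ring

lemma orient_convexComb (u v w w' : ℝ × ℝ) (θ : ℝ) :
    orient u v ((1 - θ) • w + θ • w') = (1 - θ) * orient u v w + θ * orient u v w' := by
  simp only [orient, Prod.smul_fst, Prod.smul_snd, Prod.fst_add, Prod.snd_add, smul_eq_mul]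
  ring

lemma orient_eq_zero_of_mem_openSegment {a b x : ℝ × ℝ} (hx : x ∈ openSegment ℝ a b) :
    orient a b x = 0 := by
  obtain ⟨θ, -, rfl⟩ := (openSegment_eq_image ℝ a b).subset hx
  rw [orient_convexComb]
  simp only [orient]
  ring

lemma not_segCross_of_orient_mul_pos {a b c d : ℝ × ℝ}
    (h : 0 < orient a b c * orient a b d) : ¬ SegCross a b c d := by
  rintro ⟨x, hxab, hxcd⟩
  obtain ⟨θ, ⟨hθ0, hθ1⟩, rfl⟩ := (openSegment_eq_image ℝ c d).subset hxcd
  have h0 := orient_eq_zero_of_mem_openSegment hxab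
  rw [orient_convexComb] at h0
  rcases mul_pos_iff.1 h with ⟨hc, hd⟩ | ⟨hc, hd⟩ <;> nlinarith

lemma div_sub_mem_Ioo_of_mul_neg {s t : ℝ} (h : s * t < 0) : s / (s - t) ∈ Set.Ioo 0 1 := by
  rcases mul_neg_iff.1 h with ⟨hs, ht⟩ | ⟨hs, ht⟩
  · exact ⟨div_pos hs (by linarith), (div_lt_one (by linarith)).2 (by linarith)⟩
  · exact ⟨div_pos_of_neg_of_neg hs (by linarith),
      (div_lt_one_of_neg (by linarith)).2 (by linarith)⟩

lemma segCross_of_orient_mul_neg {a b c d : ℝ × ℝ}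
    (hab : orient a b c * orient a b d < 0) (hcd : orient c d a * orient c d b < 0) :
    SegCross a b c d := by
  have hst : orient c d a - orient c d b ≠ 0 := by
    rcases mul_neg_iff.1 hcd with ⟨h1, h2⟩ | ⟨h1, h2⟩ <;> intro h <;> linarith
  have huv : orient a b c - orient a b d ≠ 0 := by
    rcases mul_neg_iff.1 hab with ⟨h1, h2⟩ | ⟨h1, h2⟩ <;> intro h <;> linarith
  refine ⟨_, (openSegment_eq_image ℝ a b).superset ⟨_, div_sub_mem_Ioo_of_mul_neg hcd, rfl⟩,
    (openSegment_eq_image ℝ c d).superset ⟨_, div_sub_mem_Ioo_of_mul_neg hab, ?_⟩⟩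
  simp only [orient] at hst huv ⊢
  ext <;> simp only [Prod.smul_fst, Prod.smul_snd, Prod.fst_add, Prod.snd_add, smul_eq_mul] <;>
    field_simp <;> ring

namespace ConvexCW

variable {m : ℕ} {p : Fin m → ℝ × ℝ}

lemma orient_neg (hp : ConvexCW m p) {i j k : Fin m} (hij : i < j) (hjk : j < k) :
    orient (p i) (p j) (p k) < 0 :=
  hp.2 i j k hij hjk

lemma orient_neg_of_cyclic (hp : ConvexCW m p) {i j k : Fin m}
    (h : i < j ∧ j < k ∨ j < k ∧ k < i ∨ k < i ∧ i < j) :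
    orient (p i) (p j) (p k) < 0 := by
  rcases h with ⟨h1, h2⟩ | ⟨h1, h2⟩ | ⟨h1, h2⟩
  · exact hp.orient_neg h1 h2
  · rw [orient_rotate]; exact hp.orient_neg h1 h2
  · rw [← orient_rotate]; exact hp.orient_neg h1 h2

lemma rotate [NeZero m] (hp : ConvexCW m p) (t : Fin m) : ConvexCW m (fun i => p (t + i)) := by
  refine ⟨hp.1.comp (add_right_injective t), fun i j k hij hjk => ?_⟩
  refine hp.orient_neg_of_cyclic ?_
  simp only [Fin.lt_def, Fin.val_add_eq_ite] at hij hjk ⊢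
  have := k.isLt
  split_ifs <;> omega

variable (hp : ConvexCW m p) {i j k l : Fin m} (hij : i < j) (hjk : j < k) (hkl : k < l)
include hp hij hjk hkl

lemma segCross_of_interleaved : SegCross (p i) (p k) (p j) (p l) := by
  apply segCross_of_orient_mul_neg
  · rw [orient_swap]
    nlinarith [hp.orient_neg hij hjk, hp.orient_neg (hij.trans hjk) hkl]
  · rw [← orient_rotate, orient_swap (p j)]
    nlinarith [hp.orient_neg hij (hjk.trans hkl), hp.orient_neg hjk hkl]

lemma not_segCross_of_separated : ¬ SegCross (p i) (p j) (p k) (p l) :=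
  not_segCross_of_orient_mul_pos
    (mul_pos_of_neg_of_neg (hp.orient_neg hij hjk) (hp.orient_neg hij (hjk.trans hkl)))

lemma not_segCross_of_nested : ¬ SegCross (p i) (p l) (p j) (p k) := by
  apply not_segCross_of_orient_mul_pos
  rw [orient_swap, orient_swap (p i) (p l)]
  nlinarith [hp.orient_neg hij (hjk.trans hkl), hp.orient_neg (hij.trans hjk) hkl]

end ConvexCW

def interleavedPairs {m : ℕ} (f : Fin m → Fin m) : Finset (Fin m × Fin m) :=
  {q | q.1 < q.2 ∧ q.2 < f q.1 ∧ f q.1 < f q.2}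

lemma ConvexCW.crNum_eq_card_interleavedPairs {m : ℕ} {p : Fin m → ℝ × ℝ}
    {f : Fin m → Fin m} (hp : ConvexCW m p) (hf : Function.Involutive f) :
    crNum m p f = #(interleavedPairs f) := by
  classical
  rw [crNum, Nat.card_eq_fintype_card, Fintype.card_subtype, interleavedPairs]
  congr 1
  ext ⟨i, j⟩
  simp only [mem_filter, mem_univ, true_and]
  constructor
  · rintro ⟨hij, hi, hj, hcross⟩
    refine ⟨hij, ?_, ?_⟩
    · rcases lt_trichotomy j (f i) with h | rfl | h
      · exact h
      · rw [hf i] at hj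
        exact absurd hij (lt_asymm hj)
      · exact absurd hcross (hp.not_segCross_of_separated hi h hj)
    · rcases lt_trichotomy (f i) (f j) with h | h | h
      · exact h
      · exact absurd (hf.injective h) hij.ne
      · exact absurd hcross (hp.not_segCross_of_nested hij hj h)
  · rintro ⟨hij, hji, hfij⟩
    exact ⟨hij, hij.trans hji, hji.trans hfij, hp.segCross_of_interleaved hij hji hfij⟩

lemma Finset.card_eq_two_mul_card_filter {β : Type*} {s : Finset β} (P : β → Prop)
    [DecidablePred P] (g : β → β) (hg : ∀ x ∈ s, g x ∈ s) (hgg : ∀ x ∈ s, g (g x) = x)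
    (hP : ∀ x ∈ s, P (g x) ↔ ¬ P x) : #s = 2 * #(s.filter P) := by
  rw [← card_filter_add_card_filter_not P, two_mul]
  congr 1
  refine card_nbij' g g (fun x hx => ?_) (fun x hx => ?_) (fun x hx => hgg x (mem_filter.1 hx).1)
    (fun x hx => hgg x (mem_filter.1 hx).1) <;>
  simp only [coe_filter, Set.mem_ofPred_eq] at hx ⊢ <;>
  exact ⟨hg x hx.1, by simpa [hP x hx.1] using hx.2⟩

lemma segCross_comm {a b c d : ℝ × ℝ} : SegCross a b c d ↔ SegCross c d a b :=
  exists_congr fun _ => and_comm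

lemma segCross_swap_left {a b c d : ℝ × ℝ} : SegCross a b c d ↔ SegCross b a c d := by
  rw [SegCross, SegCross, openSegment_symm]

lemma segCross_swap_right {a b c d : ℝ × ℝ} : SegCross a b c d ↔ SegCross a b d c := by
  rw [SegCross, SegCross, openSegment_symm ℝ c]

section Conj

variable {m : ℕ} {f : Fin m → Fin m}

lemma Function.Involutive.conj (σ : Equiv.Perm (Fin m)) (hf : Function.Involutive f) :
    Function.Involutive (σ.symm ∘ f ∘ σ) := fun i => by
  simp [hf (σ i)]

lemma conj_ne_self (σ : Equiv.Perm (Fin m)) (hfix : ∀ i, f i ≠ i) (i : Fin m) :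
    (σ.symm ∘ f ∘ σ) i ≠ i := by
  simpa [Equiv.symm_apply_eq] using hfix (σ i)

lemma IsBPM.conj {c : Fin m → Bool} (σ : Equiv.Perm (Fin m)) (hf : IsBPM m c f) :
    IsBPM m (c ∘ σ) (σ.symm ∘ f ∘ σ) :=
  ⟨hf.1.conj σ, conj_ne_self σ hf.2.1, fun i => by simpa using hf.2.2 (σ i)⟩

def ChordsCross (p : Fin m → ℝ × ℝ) (f : Fin m → Fin m) (i j : Fin m) : Prop :=
  j ≠ i ∧ j ≠ f i ∧ SegCross (p i) (p (f i)) (p j) (p (f j))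

variable {p : Fin m → ℝ × ℝ} {i j : Fin m}

lemma chordsCross_apply_left (hf : Function.Involutive f) :
    ChordsCross p f (f i) j ↔ ChordsCross p f i j := by
  rw [ChordsCross, ChordsCross, hf i, segCross_swap_left]
  tauto

lemma chordsCross_apply_right (hf : Function.Involutive f) :
    ChordsCross p f i (f j) ↔ ChordsCross p f i j := by
  rw [ChordsCross, ChordsCross, hf j, hf.injective.ne_iff, ← segCross_swap_right, ne_eq,
    hf.eq_iff]
  tauto

lemma chordsCross_comm (hf : Function.Involutive f) :
    ChordsCross p f j i ↔ ChordsCross p f i j := by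
  have : i ≠ f j ↔ j ≠ f i := by rw [ne_comm, ne_eq, hf.eq_iff]
  rw [ChordsCross, ChordsCross, this, segCross_comm, ne_comm (a := i)]

/-- Every crossing pair of chords is counted eight times: once for each choice of an endpoint of
each chord and of an order of the two chords. -/
lemma eight_mul_crNum (p : Fin m → ℝ × ℝ) (hf : Function.Involutive f)
    (hfix : ∀ i, f i ≠ i) :
    8 * crNum m p f = Nat.card {q : Fin m × Fin m // ChordsCross p f q.1 q.2} := by
  classical
  rw [crNum, Nat.card_eq_fintype_card, Fintype.card_subtype, Nat.card_eq_fintype_card,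
    Fintype.card_subtype]
  set s := filter (fun q : Fin m × Fin m => ChordsCross p f q.1 q.2) univ
  have hfix' : ∀ i, f i < i ↔ ¬ i < f i := fun i =>
    ⟨lt_asymm, fun h => lt_of_le_of_ne (not_lt.1 h) (hfix i)⟩
  have h1 : #s = 2 * #(s.filter fun q => q.1 < f q.1) :=
    card_eq_two_mul_card_filter _ (fun q => (f q.1, q.2))
      (fun q hq => by simpa [s, chordsCross_apply_left hf] using hq) (by simp [hf _])
      (fun q _ => by simp only [hf q.1, hfix'])
  have h2 : #(s.filter fun q => q.1 < f q.1) =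
      2 * #((s.filter fun q => q.1 < f q.1).filter fun q => q.2 < f q.2) :=
    card_eq_two_mul_card_filter _ (fun q => (q.1, f q.2))
      (fun q hq => by simpa [s, chordsCross_apply_right hf] using hq) (by simp [hf _])
      (fun q _ => by simp only [hf q.2, hfix'])
  have h3 : #((s.filter fun q => q.1 < f q.1).filter fun q => q.2 < f q.2) =
      2 * #(((s.filter fun q => q.1 < f q.1).filter fun q => q.2 < f q.2).filter
        fun q => q.1 < q.2) := by
    refine card_eq_two_mul_card_filter _ Prod.swap
      (fun q hq => ?_) (by simp) (fun q hq => ?_)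
    · simp only [s, mem_filter, mem_univ, true_and, Prod.fst_swap, Prod.snd_swap,
        chordsCross_comm hf] at hq ⊢
      exact ⟨⟨hq.1.1, hq.2⟩, hq.1.2⟩
    · simp only [s, mem_filter, mem_univ, true_and] at hq
      simp only [Prod.fst_swap, Prod.snd_swap, not_lt]
      exact ⟨le_of_lt, fun h => lt_of_le_of_ne h hq.1.1.1⟩
  have h4 : ((s.filter fun q => q.1 < f q.1).filter fun q => q.2 < f q.2).filter
      (fun q => q.1 < q.2) = filter (fun q : Fin m × Fin m => q.1 < q.2 ∧
        q.1 < f q.1 ∧ q.2 < f q.2 ∧ SegCross (p q.1) (p (f q.1)) (p q.2) (p (f q.2))) univ := by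
    ext ⟨i, j⟩
    simp only [s, mem_filter, mem_univ, true_and]
    unfold ChordsCross
    constructor
    · rintro ⟨⟨⟨⟨-, -, hcross⟩, hi⟩, hj⟩, hij⟩
      exact ⟨hij, hi, hj, hcross⟩
    · rintro ⟨hij, hi, hj, hcross⟩
      refine ⟨⟨⟨⟨hij.ne', ?_, hcross⟩, hi⟩, hj⟩, hij⟩
      rintro rfl
      rw [hf i] at hj
      exact lt_asymm hij hj
  rw [h1, h2, h3, h4]
  ring

lemma crNum_conj (σ : Equiv.Perm (Fin m)) (p : Fin m → ℝ × ℝ) (hf : Function.Involutive f)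
    (hfix : ∀ i, f i ≠ i) : crNum m (p ∘ σ) (σ.symm ∘ f ∘ σ) = crNum m p f := by
  refine Nat.eq_of_mul_eq_mul_left (by norm_num : 0 < 8) ?_
  rw [eight_mul_crNum (p ∘ σ) (hf.conj σ) (conj_ne_self σ hfix), eight_mul_crNum p hf hfix]
  exact Nat.card_congr ((σ.prodCongr σ).subtypeEquiv fun q => by
    simp [ChordsCross, eq_comm, Equiv.eq_symm_apply])

end Conj

lemma card_filter_val_mem {m : ℕ} {I : Finset ℕ} (hI : ∀ k ∈ I, k < m) :
    #{i : Fin m | (i : ℕ) ∈ I} = #I := by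
  rw [← card_attachFin I hI]
  congr 1
  ext
  simp

lemma card_le_choose_two_of_injOn {α β : Type*} [DecidableEq α] {F : Finset (β × β)}
    {D : Set β} {s : Finset α} (ρ : β → α) (hρ : Set.InjOn ρ D)
    (hF : ∀ q ∈ F, q.1 ∈ D ∧ q.2 ∈ D ∧ ρ q.1 ∈ s ∧ ρ q.2 ∈ s ∧ q.1 ≠ q.2 ∧
      q.swap ∉ F) :
    #F ≤ (#s).choose 2 := by
  rw [← Sym2.card_image_offDiag]
  refine card_le_card_of_injOn (fun q => s(ρ q.1, ρ q.2)) (fun q hq => ?_) ?_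
  · obtain ⟨h1, h2, hs1, hs2, hne, -⟩ := hF q hq
    exact mem_image.2 ⟨(ρ q.1, ρ q.2), mem_offDiag.2 ⟨hs1, hs2, hρ.ne h1 h2 hne⟩, rfl⟩
  · intro q hq q' hq' hqq'
    obtain ⟨h1, h2, -, -, -, hswap⟩ := hF q hq
    obtain ⟨h1', h2', -⟩ := hF q' hq'
    rcases Sym2.eq_iff.1 hqq' with ⟨e1, e2⟩ | ⟨e1, e2⟩
    · exact Prod.ext (hρ h1 h1' e1) (hρ h2 h2' e2)
    · refine absurd ?_ hswap
      rwa [show q.swap = q' from Prod.ext (hρ h2 h1' e2) (hρ h1 h2' e1)]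

def chordCount {m : ℕ} (g : Fin m → Fin m) (I J : Finset ℕ) : ℕ :=
  #{i : Fin m | (i : ℕ) ∈ I ∧ (g i : ℕ) ∈ J}

section Chords

variable {m : ℕ} {g : Fin m → Fin m}

lemma chordCount_comm (hg : Function.Involutive g) (I J : Finset ℕ) :
    chordCount g I J = chordCount g J I := by
  refine card_nbij' g g (fun i hi => ?_) (fun i hi => ?_) (fun i _ => hg i) (fun i _ => hg i) <;>
  simp only [coe_filter, mem_univ, true_and, Set.mem_ofPred_eq, hg _] at hi ⊢ <;>
  exact hi.symm

lemma card_eq_chordCount_add_chordCount {I J J' : Finset ℕ} (hI : ∀ k ∈ I, k < m)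
    (hJ : ∀ i : Fin m, (i : ℕ) ∈ I → ((g i : ℕ) ∈ J' ↔ (g i : ℕ) ∉ J)) :
    #I = chordCount g I J + chordCount g I J' := by
  rw [← card_filter_val_mem hI,
    ← card_filter_add_card_filter_not (fun i : Fin m => (g i : ℕ) ∈ J), filter_filter,
    filter_filter, chordCount, chordCount]
  congr 2
  ext i
  simp only [mem_filter, mem_univ, true_and]
  constructor
  · rintro ⟨hi, hgi⟩; exact ⟨hi, (hJ i hi).2 hgi⟩
  · rintro ⟨hi, hgi⟩; exact ⟨hi, (hJ i hi).1 hgi⟩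

end Chords

def blockColoring (m r1 b1 r2 : ℕ) : Fin m → Bool := fun j =>
  if (j : ℕ) < r1 then true
  else if (j : ℕ) < r1 + b1 then false
  else if (j : ℕ) < r1 + b1 + r2 then true
  else false

section BlockColoring

variable {m r1 b1 r2 : ℕ} {g : Fin m → Fin m}

lemma blockColoring_eq_true_iff (j : Fin m) : blockColoring m r1 b1 r2 j = true ↔
    (j : ℕ) < r1 ∨ r1 + b1 ≤ j ∧ (j : ℕ) < r1 + b1 + r2 := by
  unfold blockColoring
  split_ifs <;> simp <;> omega

lemma blockColoring_ne_blockColoring_iff (i j : Fin m) :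
    blockColoring m r1 b1 r2 j ≠ blockColoring m r1 b1 r2 i ↔
      (((j : ℕ) < r1 ∨ r1 + b1 ≤ j ∧ (j : ℕ) < r1 + b1 + r2) ↔
        ¬ ((i : ℕ) < r1 ∨ r1 + b1 ≤ i ∧ (i : ℕ) < r1 + b1 + r2)) := by
  rw [← blockColoring_eq_true_iff, ← blockColoring_eq_true_iff]
  cases blockColoring m r1 b1 r2 j <;> cases blockColoring m r1 b1 r2 i <;> simp

lemma IsBPM.red_apply_iff (hg : IsBPM m (blockColoring m r1 b1 r2) g) (i : Fin m) :
    ((g i : ℕ) < r1 ∨ r1 + b1 ≤ g i ∧ (g i : ℕ) < r1 + b1 + r2) ↔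
      ¬ ((i : ℕ) < r1 ∨ r1 + b1 ≤ i ∧ (i : ℕ) < r1 + b1 + r2) :=
  (blockColoring_ne_blockColoring_iff i (g i)).1 (hg.2.2 i)

variable (hm : r1 + b1 + r2 ≤ m) (hg : IsBPM m (blockColoring m r1 b1 r2) g)
include hm hg

lemma card_interleavedPairs_filter_fst_lt_le :
    #((interleavedPairs g).filter fun q => (q.1 : ℕ) < r1) ≤ r1.choose 2 +
      chordCount g (Ico 0 r1) (Ico r1 (r1 + b1)) *
        chordCount g (Ico r1 (r1 + b1)) (Ico (r1 + b1) (r1 + b1 + r2)) +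
      chordCount g (Ico 0 r1) (Ico (r1 + b1 + r2) m) *
        chordCount g (Ico (r1 + b1) (r1 + b1 + r2)) (Ico (r1 + b1 + r2) m) := by
  set R : Finset (Fin m) := {i | (i : ℕ) ∈ Ico 0 r1}
  have hR : #R = r1 := by
    rw [card_filter_val_mem (fun k hk => by simp at hk; omega), Nat.card_Ico, Nat.sub_zero]
  rw [show r1.choose 2 = #((R ×ˢ R).filter fun q => q.1 < q.2) by
    rw [card_product_filter_lt, hR], chordCount, chordCount, chordCount, chordCount,
    ← card_product, ← card_product]
  refine (card_le_card fun q hq => ?_).trans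
    ((card_union_le _ _).trans (Nat.add_le_add_right (card_union_le _ _) _))
  have := hg.red_apply_iff q.1
  have := hg.red_apply_iff q.2
  have := (g q.1).isLt
  have := (g q.2).isLt
  simp only [interleavedPairs, R, mem_filter, mem_univ, true_and, mem_union, mem_product,
    mem_Ico, Fin.lt_def] at hq ⊢
  omega

lemma card_interleavedPairs_filter_le_fst_le :
    #((interleavedPairs g).filter fun q => r1 ≤ (q.1 : ℕ)) ≤ r2.choose 2 := by
  set R : Finset (Fin m) := {i | (i : ℕ) ∈ Ico (r1 + b1) (r1 + b1 + r2)}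
  have hR : #R = r2 := by
    rw [card_filter_val_mem (fun k hk => by simp at hk; omega), Nat.card_Ico]
    omega
  rw [← hR]
  -- map a pair of chords to their red endpoints, which lie in the second red block
  refine card_le_choose_two_of_injOn (fun k => if (k : ℕ) < r1 + b1 then g k else k)
    (D := {k | k < g k ∧ r1 ≤ (k : ℕ)}) ?_ ?_
  · intro k hk k' hk' h
    have h' := congrArg g h
    simp only [Set.mem_ofPred_eq, Fin.lt_def] at hk hk'
    dsimp only at h h'
    split_ifs at h h' <;> (try simp only [hg.1 _] at h') <;> rw [Fin.ext_iff] at h h' <;> omega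
  · rintro ⟨i, j⟩ hq
    have := hg.red_apply_iff i
    have := hg.red_apply_iff j
    have := (g i).isLt
    have := (g j).isLt
    simp only [interleavedPairs, R, mem_filter, mem_univ, true_and, mem_Ico, Fin.lt_def,
      Set.mem_ofPred_eq, Prod.swap, ne_eq, Fin.ext_iff] at hq ⊢
    split_ifs <;> omega

lemma IsBPM.exists_card_interleavedPairs_le :
    ∃ x y z w, x + y = r1 ∧ z + w = r2 ∧ x + z = b1 ∧
      #(interleavedPairs g) ≤ r1.choose 2 + r2.choose 2 + x * z + y * w := by
  have partner (lo hi : ℕ) (J J' : Finset ℕ) (hhi : hi ≤ m)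
      (hJ : ∀ i : Fin m, (i : ℕ) ∈ Ico lo hi → ((g i : ℕ) ∈ J' ↔ (g i : ℕ) ∉ J)) :
      hi - lo = chordCount g (Ico lo hi) J + chordCount g (Ico lo hi) J' := by
    rw [← Nat.card_Ico]
    exact card_eq_chordCount_add_chordCount (fun k hk => by simp only [mem_Ico] at hk; omega) hJ
  refine ⟨chordCount g (Ico 0 r1) (Ico r1 (r1 + b1)),
    chordCount g (Ico 0 r1) (Ico (r1 + b1 + r2) m),
    chordCount g (Ico r1 (r1 + b1)) (Ico (r1 + b1) (r1 + b1 + r2)),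
    chordCount g (Ico (r1 + b1) (r1 + b1 + r2)) (Ico (r1 + b1 + r2) m), ?_, ?_, ?_, ?_⟩
  · rw [← partner 0 r1 _ _ (by omega) fun i hi => ?_, Nat.sub_zero]
    have := hg.red_apply_iff i
    simp only [mem_Ico] at hi ⊢
    omega
  · rw [chordCount_comm hg.1 (Ico r1 (r1 + b1)), ← partner _ _ _ _ (by omega) fun i hi => ?_,
      Nat.add_sub_cancel_left]
    have := hg.red_apply_iff i
    have := (g i).isLt
    simp only [mem_Ico] at hi ⊢
    omega
  · rw [chordCount_comm hg.1 (Ico 0 r1), ← partner _ _ _ _ (by omega) fun i hi => ?_,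
      Nat.add_sub_cancel_left]
    have := hg.red_apply_iff i
    simp only [mem_Ico] at hi ⊢
    omega
  · rw [← card_filter_add_card_filter_not (fun q => r1 ≤ (q.1 : ℕ))]
    have := card_interleavedPairs_filter_fst_lt_le hm hg
    have := card_interleavedPairs_filter_le_fst_le hm hg
    simp only [not_le] at *
    omega

end BlockColoring

/-- Chords join, in order of position, the first `x` points of the first red block to the last
`x` points of the first blue block, the other `y` points of that red block to the first `y` points
of the second blue block, the first `w` points of the second red block to the last `w` points of
the second blue block, and the other `z` points of that red block to the first `z` blue points. -/
def blockMatching (r1 b1 r2 x y z w i : ℕ) : ℕ :=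
  if i < x then r1 + z + i
  else if i < r1 then r1 + b1 + r2 + (i - x)
  else if i < r1 + z then r1 + b1 + w + (i - r1)
  else if i < r1 + b1 then i - (r1 + z)
  else if i < r1 + b1 + w then r1 + b1 + r2 + y + (i - (r1 + b1))
  else if i < r1 + b1 + r2 then r1 + (i - (r1 + b1 + w))
  else if i < r1 + b1 + r2 + y then x + (i - (r1 + b1 + r2))
  else r1 + b1 + (i - (r1 + b1 + r2 + y))

lemma blockMatching_cases {r1 b1 r2 x y z w i v : ℕ}
    (hv : blockMatching r1 b1 r2 x y z w i = v) :
    (i < x ∧ v = r1 + z + i) ∨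
    (x ≤ i ∧ i < r1 ∧ v + x = r1 + b1 + r2 + i) ∨
    (r1 ≤ i ∧ i < r1 + z ∧ v = b1 + w + i) ∨
    (r1 + z ≤ i ∧ i < r1 + b1 ∧ v + r1 + z = i) ∨
    (r1 + b1 ≤ i ∧ i < r1 + b1 + w ∧ v = r2 + y + i) ∨
    (r1 + b1 + w ≤ i ∧ i < r1 + b1 + r2 ∧ v + b1 + w = i) ∨
    (r1 + b1 + r2 ≤ i ∧ i < r1 + b1 + r2 + y ∧ v + r1 + b1 + r2 = x + i) ∨
    (r1 + b1 + r2 + y ≤ i ∧ v + r2 + y = i) := by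
  subst hv
  unfold blockMatching
  split_ifs <;> omega

section BlockMatching

variable {m r1 b1 r2 b2 x y z w : ℕ} (hm : r1 + b1 + r2 + b2 = m) (hxy : x + y = r1)
  (hzw : z + w = r2) (hxz : x + z = b1) (hyw : y + w = b2)
include hm hxy hzw hxz hyw

lemma blockMatching_lt {i : ℕ} (hi : i < m) : blockMatching r1 b1 r2 x y z w i < m := by
  have := blockMatching_cases (rfl : blockMatching r1 b1 r2 x y z w i = _)
  omega

lemma blockMatching_blockMatching {i : ℕ} (hi : i < m) :
    blockMatching r1 b1 r2 x y z w (blockMatching r1 b1 r2 x y z w i) = i := by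
  have := blockMatching_cases (rfl : blockMatching r1 b1 r2 x y z w i = _)
  have := blockMatching_cases
    (rfl : blockMatching r1 b1 r2 x y z w (blockMatching r1 b1 r2 x y z w i) = _)
  omega

/-- All chords of `blockMatching` with red endpoints in the same block cross, and so do chords
from different red blocks to the same blue block. -/
lemma le_card_interleavedPairs_of_blockMatching {g : Fin m → Fin m}
    (hg : ∀ i, (g i : ℕ) = blockMatching r1 b1 r2 x y z w i) :
    r1.choose 2 + r2.choose 2 + x * z + y * w ≤ #(interleavedPairs g) := by
  set S1 : Finset (Fin m) := {i | (i : ℕ) ∈ Ico 0 r1}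
  set S2 : Finset (Fin m) := {i | (i : ℕ) ∈ Ico r1 (r1 + z) ∪ Ico (r1 + b1) (r1 + b1 + w)}
  set X : Finset (Fin m) := {i | (i : ℕ) ∈ Ico 0 x}
  set Y : Finset (Fin m) := {i | (i : ℕ) ∈ Ico x r1}
  set Z : Finset (Fin m) := {i | (i : ℕ) ∈ Ico r1 (r1 + z)}
  set W : Finset (Fin m) := {i | (i : ℕ) ∈ Ico (r1 + b1) (r1 + b1 + w)}
  have hS2 : #S2 = r2 := by
    rw [card_filter_val_mem (fun k hk => by simp only [mem_union, mem_Ico] at hk; omega),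
      card_union_of_disjoint
        (disjoint_left.2 fun k hk hk' => by simp only [mem_Ico] at hk hk'; omega),
      Nat.card_Ico, Nat.card_Ico]
    omega
  calc r1.choose 2 + r2.choose 2 + x * z + y * w
      = #((S1 ×ˢ S1).filter fun q => q.1 < q.2) + #((S2 ×ˢ S2).filter fun q => q.1 < q.2) +
          #(X ×ˢ Z) + #(Y ×ˢ W) := by
        rw [card_product_filter_lt, card_product_filter_lt, card_product, card_product, hS2]
        simp only [S1, X, Y, Z, W]
        repeat rw [card_filter_val_mem (fun k hk => by simp only [mem_Ico] at hk; omega)]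
        simp only [Nat.card_Ico]
        congr <;> omega
    _ = #(((S1 ×ˢ S1).filter fun q => q.1 < q.2) ∪ ((S2 ×ˢ S2).filter fun q => q.1 < q.2) ∪
          X ×ˢ Z ∪ Y ×ˢ W) := by
        rw [card_union_of_disjoint, card_union_of_disjoint, card_union_of_disjoint] <;>
        refine disjoint_left.2 fun q hq hq' => ?_ <;>
        simp only [S1, S2, X, Y, Z, W, mem_union, mem_filter, mem_product, mem_univ, true_and,
          mem_Ico] at hq hq' <;>
        omega
    _ ≤ #(interleavedPairs g) := by
        refine card_le_card fun q hq => ?_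
        have := blockMatching_cases (hg q.1).symm
        have := blockMatching_cases (hg q.2).symm
        simp only [S1, S2, X, Y, Z, W, mem_union, mem_filter, mem_product, mem_univ, true_and,
          mem_Ico, interleavedPairs, Fin.lt_def] at hq ⊢
        omega

lemma exists_isBPM_blockColoring_le_card_interleavedPairs : ∃ g : Fin m → Fin m,
    IsBPM m (blockColoring m r1 b1 r2) g ∧
      r1.choose 2 + r2.choose 2 + x * z + y * w ≤ #(interleavedPairs g) := by
  refine ⟨fun i =>
      ⟨blockMatching r1 b1 r2 x y z w i, blockMatching_lt hm hxy hzw hxz hyw i.isLt⟩,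
    ⟨fun i => Fin.ext (blockMatching_blockMatching hm hxy hzw hxz hyw i.isLt), fun i h => ?_,
      fun i => ?_⟩, le_card_interleavedPairs_of_blockMatching hm hxy hzw hxz hyw fun _ => rfl⟩
  all_goals have := blockMatching_cases (rfl : blockMatching r1 b1 r2 x y z w i = _)
  · rw [Fin.ext_iff] at h
    dsimp only at h
    omega
  · have := i.isLt
    rw [blockColoring_ne_blockColoring_iff]
    dsimp only
    omega

end BlockMatching

/-- `8 * (maxCrBound n - (r1.choose 2 + r2.choose 2 + x * z + y * w))` after completing the
square in `x`, where `y = r1 - x`, `z = b1 - x` and `w = r2 - b1 + x`. -/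
def crossingGap (n r1 r2 b1 x : ℕ) : ℤ :=
  (4 * x - 2 * b1 - r1 + r2 : ℤ) ^ 2 - 2 * ((r1 : ℤ) - b1) ^ 2 - 2 * ((r2 : ℤ) - b1) ^ 2 +
    if n % 4 = 0 then 0 else if n % 4 = 2 then -4 else 1

section Arithmetic

variable {n r1 r2 b1 b2 x y z w : ℕ}

lemma eight_mul_maxCrBound_sub (hr : r1 + r2 = n) (hxy : x + y = r1) (hzw : z + w = r2)
    (hxz : x + z = b1) :
    8 * (maxCrBound n - ((r1.choose 2 + r2.choose 2 + x * z + y * w : ℕ) : ℚ)) =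
      crossingGap n r1 r2 b1 x := by
  have hy : (y : ℚ) = r1 - x := by rw [← hxy]; push_cast; ring
  have hz : (z : ℚ) = b1 - x := by rw [← hxz]; push_cast; ring
  have hw : (w : ℚ) = r2 - b1 + x := by rw [← hzw, ← hxz]; push_cast; ring
  rw [maxCrBound, crossingGap, ← hr]
  push_cast [Nat.cast_choose_two, apply_ite (Int.cast : ℤ → ℚ)]
  rw [hy, hz, hw]
  split_ifs <;> ring

variable (hr : r1 + r2 = n) (hb : b1 + b2 = n) (hr12 : r1 ≤ r2 + 1) (hr21 : r2 ≤ r1 + 1)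
  (hb12 : b1 ≤ b2 + 1) (hb21 : b2 ≤ b1 + 1)
include hr hb hr12 hr21 hb12 hb21

lemma balanced_cases :
    (r1 = b1 ∧ r2 = b1 ∧ (n % 4 = 0 ∨ n % 4 = 2)) ∨
      (((r1 : ℤ) - b1) ^ 2 + ((r2 : ℤ) - b1) ^ 2 = 1 ∧ n % 2 = 1) := by
  rcases (by omega : r1 = b1 ∧ r2 = b1 ∨ r1 = b1 ∧ (r2 = b1 + 1 ∨ r2 + 1 = b1) ∨
      r2 = b1 ∧ (r1 = b1 + 1 ∨ r1 + 1 = b1))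
    with ⟨h1, h2⟩ | ⟨h1, h2 | h2⟩ | ⟨h1, h2 | h2⟩
  · exact Or.inl ⟨h1, h2, by omega⟩
  all_goals
    refine Or.inr ⟨?_, by omega⟩
    subst_vars
    push_cast
    ring

lemma crossingGap_nonneg (x : ℕ) : 0 ≤ crossingGap n r1 r2 b1 x := by
  rw [crossingGap]
  rcases balanced_cases hr hb hr12 hr21 hb12 hb21 with ⟨h1, h2, h | h⟩ | ⟨h, hn⟩
  · rw [h1, h2]
    simp only [h, if_true]
    nlinarith [sq_nonneg (4 * x - 2 * b1 - b1 + b1 : ℤ)]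
  · rw [h1, h2, if_neg (by omega), if_pos h,
      show (4 * x - 2 * b1 - b1 + b1 : ℤ) = 2 * (2 * x - b1) by ring]
    nlinarith [(one_le_sq_iff_one_le_abs _).2
      (Int.one_le_abs (by omega : (2 * x - b1 : ℤ) ≠ 0))]
  · rw [if_neg (by omega), if_neg (by omega)]
    nlinarith [(one_le_sq_iff_one_le_abs _).2
      (Int.one_le_abs (by omega : (4 * x - 2 * b1 - r1 + r2 : ℤ) ≠ 0))]

lemma crossingGap_eq_zero : crossingGap n r1 r2 b1 ((2 * b1 + r1 + 2 - r2) / 4) = 0 := by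
  set x := (2 * b1 + r1 + 2 - r2) / 4
  have hx : 2 * b1 + r1 + 2 < 4 * x + 4 + r2 ∧ 4 * x + r2 ≤ 2 * b1 + r1 + 2 := by omega
  rw [crossingGap]
  rcases balanced_cases hr hb hr12 hr21 hb12 hb21 with ⟨h1, h2, h | h⟩ | ⟨h, hn⟩
  · rw [h1, h2, if_pos h, (by omega : (4 * x - 2 * b1 - b1 + b1 : ℤ) = 0)]
    ring
  · rw [h1, h2, if_neg (by omega), if_pos h, (by omega : (4 * x - 2 * b1 - b1 + b1 : ℤ) = 2)]
    ring
  · rw [if_neg (by omega), if_neg (by omega)]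
    rcases (by omega : (4 * x - 2 * b1 - r1 + r2 : ℤ) = 1 ∨
        (4 * x - 2 * b1 - r1 + r2 : ℤ) = -1) with hd | hd <;>
    rw [hd] <;> linarith

lemma blockCrossings_le_maxCrBound (hxy : x + y = r1) (hzw : z + w = r2) (hxz : x + z = b1) :
    ((r1.choose 2 + r2.choose 2 + x * z + y * w : ℕ) : ℚ) ≤ maxCrBound n := by
  have hgap : (0 : ℚ) ≤ crossingGap n r1 r2 b1 x :=
    mod_cast crossingGap_nonneg hr hb hr12 hr21 hb12 hb21 x
  linarith [eight_mul_maxCrBound_sub hr hxy hzw hxz]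

lemma exists_blockCrossings_eq_maxCrBound :
    ∃ x y z w, x + y = r1 ∧ z + w = r2 ∧ x + z = b1 ∧ y + w = b2 ∧
      ((r1.choose 2 + r2.choose 2 + x * z + y * w : ℕ) : ℚ) = maxCrBound n := by
  set x := (2 * b1 + r1 + 2 - r2) / 4
  have hgap := eight_mul_maxCrBound_sub (b1 := b1) (x := x) (y := r1 - x) (z := b1 - x)
    (w := r2 + x - b1) hr (by omega) (by omega) (by omega)
  rw [crossingGap_eq_zero hr hb hr12 hr21 hb12 hb21, Int.cast_zero] at hgap
  exact ⟨x, r1 - x, b1 - x, r2 + x - b1, by omega, by omega, by omega, by omega, by linarith⟩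

end Arithmetic

lemma Balanced4.exists_blockColoring {n : ℕ} {c : Fin (2 * n) → Bool} (hbal : Balanced4 n c) :
    ∃ (t : Fin (2 * n)) (r1 b1 r2 b2 : ℕ), 0 < n ∧ r1 + b1 + r2 + b2 = 2 * n ∧ r1 + r2 = n ∧
      b1 + b2 = n ∧ r1 ≤ r2 + 1 ∧ r2 ≤ r1 + 1 ∧ b1 ≤ b2 + 1 ∧ b2 ≤ b1 + 1 ∧
      ∀ i, c (t + i) = blockColoring (2 * n) r1 b1 r2 i := by
  obtain ⟨t, r1, b1, r2, b2, ⟨hr1, -, -, -, hm, hr, hc⟩, hsize⟩ := hbal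
  exact ⟨t, r1, b1, r2, b2, by omega, hm, hr, by omega, hsize r1 (by simp) r2 (by simp),
    hsize r2 (by simp) r1 (by simp), hsize b1 (by simp) b2 (by simp),
    hsize b2 (by simp) b1 (by simp), hc⟩

theorem stmt2_general (n : ℕ) (p : Fin (2 * n) → ℝ × ℝ) (c : Fin (2 * n) → Bool)
    (hconv : ConvexCW (2 * n) p) (hbal : Balanced4 n c) :
    (∀ f : Fin (2 * n) → Fin (2 * n), IsBPM (2 * n) c f →
        (crNum (2 * n) p f : ℚ) ≤ maxCrBound n) ∧
    (∃ f : Fin (2 * n) → Fin (2 * n), IsBPM (2 * n) c f ∧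
        (crNum (2 * n) p f : ℚ) = maxCrBound n) := by
  obtain ⟨t, r1, b1, r2, b2, hn, hm, hr, hb, hr12, hr21, hb12, hb21, hc⟩ :=
    hbal.exists_blockColoring
  have : NeZero (2 * n) := ⟨by omega⟩
  set σ : Equiv.Perm (Fin (2 * n)) := Equiv.addLeft t
  have hcσ : c ∘ σ = blockColoring (2 * n) r1 b1 r2 := funext hc
  have hq : ConvexCW (2 * n) (p ∘ σ) := hconv.rotate t
  have upper (f : Fin (2 * n) → Fin (2 * n)) (hf : IsBPM (2 * n) c f) :
      (crNum (2 * n) p f : ℚ) ≤ maxCrBound n := by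
    have hg := hcσ ▸ hf.conj σ
    obtain ⟨x, y, z, w, hxy, hzw, hxz, hle⟩ := hg.exists_card_interleavedPairs_le (by omega)
    rw [← crNum_conj σ p hf.1 hf.2.1, hq.crNum_eq_card_interleavedPairs hg.1]
    exact (Nat.cast_le.2 hle).trans
      (blockCrossings_le_maxCrBound hr hb hr12 hr21 hb12 hb21 hxy hzw hxz)
  obtain ⟨x, y, z, w, hxy, hzw, hxz, hyw, heq⟩ :=
    exists_blockCrossings_eq_maxCrBound hr hb hr12 hr21 hb12 hb21
  obtain ⟨g, hg, hcard⟩ :=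
    exists_isBPM_blockColoring_le_card_interleavedPairs hm hxy hzw hxz hyw
  have hf : IsBPM (2 * n) c (σ ∘ g ∘ σ.symm) := by
    simpa [← hcσ, Function.comp_assoc] using hg.conj σ.symm
  refine ⟨upper, _, hf, le_antisymm (upper _ hf) ?_⟩
  rw [← heq, ← crNum_conj σ p hf.1 hf.2.1,
    show σ.symm ∘ (σ ∘ g ∘ σ.symm) ∘ σ = g by ext; simp,
    hq.crNum_eq_card_interleavedPairs hg.1]
  exact_mod_cast hcard

/-- For a bichromatic convex point set with a balanced 4-block coloring,
the maximum number of crossings of a bichromatic perfect matching equals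
`3n²/8 − n/2 + c`, where `c = 0, 1/8, −1/2, 1/8` according to `n mod 4 = 0, 1, 2, 3`. -/
theorem stmt2 (n : ℕ) (p : Fin (2 * n) → ℝ × ℝ) (c : Fin (2 * n) → Bool)
    (hconv : ConvexCW (2 * n) p) (hcol : Bichrom n c) (hbal : Balanced4 n c) :
    (∀ f : Fin (2 * n) → Fin (2 * n), IsBPM (2 * n) c f →
        (crNum (2 * n) p f : ℚ) ≤ maxCrBound n) ∧
    (∃ f : Fin (2 * n) → Fin (2 * n), IsBPM (2 * n) c f ∧
        (crNum (2 * n) p f : ℚ) = maxCrBound n) :=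
  stmt2_general n p c hconv hbal
end

section
/- Let P be a bichromatic convex point set with n red and n blue points whose coloring is a 4-block coloring with blocks R1, B1, R2, B2, and let M be a max-crossing bichromatic perfect matching on P. Then for each block X ∈ {R1, B1, R2, B2}, the matching edges of M having an endpoint in X pairwise cross (they form a crossing family). -/
open Finset

namespace S3

def sig (A B C : ℝ × ℝ) : ℝ := (B.1 - A.1) * (C.2 - A.2) - (B.2 - A.2) * (C.1 - A.1)

lemma segCross_comm {a b c d : ℝ × ℝ} : SegCross a b c d ↔ SegCross c d a b := by
  unfold SegCross; exact ⟨fun ⟨x, h1, h2⟩ => ⟨x, h2, h1⟩, fun ⟨x, h1, h2⟩ => ⟨x, h2, h1⟩⟩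

lemma segCross_swap₁ {a b c d : ℝ × ℝ} : SegCross a b c d ↔ SegCross b a c d := by
  unfold SegCross; rw [openSegment_symm ℝ a b]

lemma segCross_swap₂ {a b c d : ℝ × ℝ} : SegCross a b c d ↔ SegCross a b d c := by
  unfold SegCross; rw [openSegment_symm ℝ c d]

lemma sig_affine (A B C D : ℝ × ℝ) (t : ℝ) :
    sig A B ((1 - t) • C + t • D) = (1 - t) * sig A B C + t * sig A B D := by
  simp only [sig, Prod.smul_fst, Prod.smul_snd, Prod.fst_add, Prod.snd_add, smul_eq_mul]
  ring

lemma mem_open (A B : ℝ × ℝ) (t : ℝ) (h0 : 0 < t) (h1 : t < 1) :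
    (1 - t) • A + t • B ∈ openSegment ℝ A B := by
  rw [openSegment_eq_image]
  exact ⟨t, ⟨h0, h1⟩, rfl⟩

lemma unit_interval_of {x y s : ℝ} (hxy : x * y < 0) (heq : x = s * (x - y)) :
    0 < s ∧ s < 1 := by
  rcases mul_neg_iff.mp hxy with ⟨hx, hy⟩ | ⟨hx, hy⟩
  · have hd : 0 < x - y := by linarith
    constructor
    · by_contra h; push_neg at h; nlinarith [heq]
    · by_contra h; push_neg at h; nlinarith [heq]
  · have hd : x - y < 0 := by linarith
    constructor
    · by_contra h; push_neg at h; nlinarith [heq]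
    · by_contra h; push_neg at h; nlinarith [heq]

lemma param_of_sig_zero {C D X : ℝ × ℝ} (hCD : C ≠ D) (h : sig C D X = 0) :
    ∃ s : ℝ, X = (1 - s) • C + s • D := by
  have hc : C.1 ≠ D.1 ∨ C.2 ≠ D.2 := by
    by_contra hcon
    push_neg at hcon
    exact hCD (Prod.ext hcon.1 hcon.2)
  simp only [sig] at h
  rcases hc with hc | hc
  · refine ⟨(X.1 - C.1) / (D.1 - C.1), ?_⟩
    have hne : D.1 - C.1 ≠ 0 := fun hh => hc (by linarith)
    apply Prod.ext <;>
      simp only [Prod.smul_fst, Prod.smul_snd, Prod.fst_add, Prod.snd_add, smul_eq_mul] <;>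
      field_simp <;> ring_nf <;> nlinarith [h]
  · refine ⟨(X.2 - C.2) / (D.2 - C.2), ?_⟩
    have hne : D.2 - C.2 ≠ 0 := fun hh => hc (by linarith)
    apply Prod.ext <;>
      simp only [Prod.smul_fst, Prod.smul_snd, Prod.fst_add, Prod.snd_add, smul_eq_mul] <;>
      field_simp <;> ring_nf <;> nlinarith [h]

lemma cross_of_sides {A B C D : ℝ × ℝ}
    (hc : sig A B C * sig A B D < 0) (ha : sig C D A * sig C D B < 0) :
    SegCross A B C D := by
  have hCD : C ≠ D := by
    rintro rfl
    have h0 : sig C C A = 0 := by simp [sig]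
    rw [h0, zero_mul] at ha
    exact absurd ha (lt_irrefl 0)
  have hden : sig C D A - sig C D B ≠ 0 := by
    intro h
    rw [sub_eq_zero] at h
    rw [h] at ha
    nlinarith [sq_nonneg (sig C D B)]
  set t := sig C D A / (sig C D A - sig C D B) with hT
  have heqt : sig C D A = t * (sig C D A - sig C D B) := by
    rw [hT]; field_simp
  obtain ⟨ht0, ht1⟩ := unit_interval_of ha heqt
  set X := (1 - t) • A + t • B with hX
  have hXmem : X ∈ openSegment ℝ A B := mem_open A B t ht0 ht1
  have hsX : sig C D X = 0 := by
    rw [hX, sig_affine]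
    nlinarith [heqt]
  obtain ⟨s, hs⟩ := param_of_sig_zero hCD hsX
  have hABX : sig A B X = 0 := by
    rw [hX, sig_affine]
    have h1 : sig A B A = 0 := by simp [sig]
    have h2 : sig A B B = 0 := by simp [sig]; ring
    rw [h1, h2]; ring
  have hcomb : (1 - s) * sig A B C + s * sig A B D = 0 := by
    rw [← sig_affine, ← hs, hABX]
  have hceq : sig A B C = s * (sig A B C - sig A B D) := by linear_combination hcomb
  obtain ⟨hs0, hs1⟩ := unit_interval_of hc hceq
  exact ⟨X, hXmem, hs ▸ mem_open C D s hs0 hs1⟩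



def BtwN (a b x : ℕ) : Prop := (a < x ∧ x < b) ∨ (b < x ∧ x < a)

variable {m : ℕ} {p : Fin m → ℝ × ℝ}

lemma sig_lt (h : ConvexCW m p) {x y z : Fin m} (hxy : x.val < y.val) (hyz : y.val < z.val) :
    sig (p x) (p y) (p z) < 0 := h.2 x y z hxy hyz

lemma sig_cyc (A B C : ℝ × ℝ) : sig A B C = sig B C A := by unfold sig; ring

lemma sig_swap (A B C : ℝ × ℝ) : sig A B C = - sig A C B := by unfold sig; ring

/-- Side lemma: for `a < b`, the point `x` is left of the directed line `p a → p b`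
iff `a < x < b`. -/
lemma side_pos (h : ConvexCW m p) {a b x : Fin m} (h1 : a.val < x.val) (h2 : x.val < b.val) :
    0 < sig (p a) (p b) (p x) := by
  have := sig_lt h h1 h2
  rw [sig_swap] at this
  linarith

lemma side_neg (h : ConvexCW m p) {a b x : Fin m} (hab : a.val < b.val)
    (hx : x.val < a.val ∨ b.val < x.val) : sig (p a) (p b) (p x) < 0 := by
  rcases hx with hx | hx
  · have := sig_lt h hx hab
    rwa [sig_cyc] at this
  · exact sig_lt h hab hx

lemma side' (h : ConvexCW m p) {a b x : Fin m} (hab : a.val < b.val)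
    (hxa : x ≠ a) (hxb : x ≠ b) :
    (BtwN a.val b.val x.val → 0 < sig (p a) (p b) (p x)) ∧
    (¬ BtwN a.val b.val x.val → sig (p a) (p b) (p x) < 0) := by
  have hxa' : x.val ≠ a.val := fun hh => hxa (Fin.ext hh)
  have hxb' : x.val ≠ b.val := fun hh => hxb (Fin.ext hh)
  constructor
  · intro hb
    rcases hb with ⟨h1, h2⟩ | ⟨h1, h2⟩
    · exact side_pos h h1 h2
    · omega
  · intro hb
    apply side_neg h hab
    unfold BtwN at hb
    omega

/-- The crossing criterion, raw form with sorted pairs. -/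
lemma crit_aux (h : ConvexCW m p) {a b c d : Fin m}
    (hab : a.val < b.val) (hcd : c.val < d.val)
    (hac : a ≠ c) (had : a ≠ d) (hbc : b ≠ c) (hbd : b ≠ d) :
    SegCross (p a) (p b) (p c) (p d) ↔
      ¬ (BtwN a.val b.val c.val ↔ BtwN a.val b.val d.val) := by
  have hac' : a.val ≠ c.val := fun hh => hac (Fin.ext hh)
  have had' : a.val ≠ d.val := fun hh => had (Fin.ext hh)
  have hbc' : b.val ≠ c.val := fun hh => hbc (Fin.ext hh)
  have hbd' : b.val ≠ d.val := fun hh => hbd (Fin.ext hh)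
  constructor
  · -- crossing implies interleaving
    intro ⟨x, hx1, hx2⟩
    by_contra hiff

    -- both c, d on the same side of line ab
    have hsc := side' h hab hac.symm hbc.symm
    have hsd := side' h hab had.symm hbd.symm
    rw [openSegment_eq_image] at hx1 hx2
    obtain ⟨τ, hτ, hxτ⟩ := hx1
    obtain ⟨θ, hθ, hxθ⟩ := hx2
    have hzero : sig (p a) (p b) x = 0 := by
      rw [← hxτ, sig_affine]
      have h1 : sig (p a) (p b) (p a) = 0 := by simp [sig]
      have h2 : sig (p a) (p b) (p b) = 0 := by simp [sig]; ring
      rw [h1, h2]; ring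
    have hcomb : sig (p a) (p b) x =
        (1 - θ) * sig (p a) (p b) (p c) + θ * sig (p a) (p b) (p d) := by
      rw [← hxθ, sig_affine]
    by_cases hbtw : BtwN a.val b.val c.val
    · have h1 := hsc.1 hbtw
      have h2 := hsd.1 (hiff.mp hbtw)
      obtain ⟨hθ0, hθ1⟩ := hθ
      nlinarith [hzero, hcomb]
    · have h1 := hsc.2 hbtw
      have h2 := hsd.2 (fun hh => hbtw (hiff.mpr hh))
      obtain ⟨hθ0, hθ1⟩ := hθ
      nlinarith [hzero, hcomb]
  · -- interleaving implies crossing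
    intro hxor
    have hxor2 : ¬ (BtwN c.val d.val a.val ↔ BtwN c.val d.val b.val) := by
      unfold BtwN at hxor ⊢
      omega
    have hsc := side' h hab hac.symm hbc.symm
    have hsd := side' h hab had.symm hbd.symm
    have hsa := side' h hcd hac had
    have hsb := side' h hcd hbc hbd
    apply cross_of_sides
    · rcases Classical.em (BtwN a.val b.val c.val) with hc1 | hc1
      · have h1 := hsc.1 hc1
        have h2 := hsd.2 (fun hh => hxor (iff_of_true hc1 hh))
        exact mul_neg_of_pos_of_neg h1 h2
      · have h1 := hsc.2 hc1
        have h2 := hsd.1 (by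
          by_contra hh
          exact hxor (iff_of_false hc1 hh))
        nlinarith
    · rcases Classical.em (BtwN c.val d.val a.val) with hc1 | hc1
      · have h1 := hsa.1 hc1
        have h2 := hsb.2 (fun hh => hxor2 (iff_of_true hc1 hh))
        exact mul_neg_of_pos_of_neg h1 h2
      · have h1 := hsa.2 hc1
        have h2 := hsb.1 (by
          by_contra hh
          exact hxor2 (iff_of_false hc1 hh))
        nlinarith


lemma btwN_comm {a b x : ℕ} : BtwN a b x ↔ BtwN b a x := by unfold BtwN; omega

/-- The crossing criterion for arbitrary distinct indices. -/
lemma crit (h : ConvexCW m p) {a b c d : Fin m}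
    (hab : a ≠ b) (hcd : c ≠ d)
    (hac : a ≠ c) (had : a ≠ d) (hbc : b ≠ c) (hbd : b ≠ d) :
    SegCross (p a) (p b) (p c) (p d) ↔
      ¬ (BtwN a.val b.val c.val ↔ BtwN a.val b.val d.val) := by
  have hab' : a.val ≠ b.val := fun hh => hab (Fin.ext hh)
  have hcd' : c.val ≠ d.val := fun hh => hcd (Fin.ext hh)
  have key : ∀ (a b c d : Fin m), a.val < b.val → c.val < d.val →
      a ≠ c → a ≠ d → b ≠ c → b ≠ d →
      (SegCross (p a) (p b) (p c) (p d) ↔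
        ¬ (BtwN a.val b.val c.val ↔ BtwN a.val b.val d.val)) := by
    intro a b c d h1 h2 h3 h4 h5 h6
    exact crit_aux h h1 h2 h3 h4 h5 h6
  rcases lt_or_gt_of_ne hab' with h1 | h1 <;> rcases lt_or_gt_of_ne hcd' with h2 | h2
  · exact key a b c d h1 h2 hac had hbc hbd
  · rw [segCross_swap₂, key a b d c h1 h2 had hac hbd hbc]
    constructor <;> (intro hh hiff; exact hh (Iff.comm.mp hiff))
  · rw [segCross_swap₁, key b a c d h1 h2 hbc hbd hac had]
    have e1 : BtwN b.val a.val c.val ↔ BtwN a.val b.val c.val := btwN_comm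
    have e2 : BtwN b.val a.val d.val ↔ BtwN a.val b.val d.val := btwN_comm
    rw [e1, e2]
  · rw [segCross_swap₁, segCross_swap₂, key b a d c h1 h2 hbd hbc had hac]
    have e1 : BtwN b.val a.val c.val ↔ BtwN a.val b.val c.val := btwN_comm
    have e2 : BtwN b.val a.val d.val ↔ BtwN a.val b.val d.val := btwN_comm
    rw [e1, e2]
    constructor <;> (intro hh hiff; exact hh (Iff.comm.mp hiff))

lemma sub_val' (m : ℕ) (i x : Fin m) :
    (x - i).val = if i.val ≤ x.val then x.val - i.val else x.val + m - i.val := by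
  have hi := i.is_lt; have hx := x.is_lt
  simp only [Fin.sub_def]
  split_ifs with h
  · have h2 : m - i.val + x.val = (x.val - i.val) + m := by omega
    rw [h2, Nat.add_mod_right, Nat.mod_eq_of_lt (by omega)]
  · rw [Nat.mod_eq_of_lt (by omega)]; omega

/-- Interleaving is invariant under cyclic rotation. -/
lemma btw_rot {m : ℕ} (i : Fin m) {a b c d : Fin m}
    (hab : a ≠ b) (hcd : c ≠ d)
    (hac : a ≠ c) (had : a ≠ d) (hbc : b ≠ c) (hbd : b ≠ d) :
    (¬ (BtwN a.val b.val c.val ↔ BtwN a.val b.val d.val)) ↔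
    (¬ (BtwN (a - i).val (b - i).val (c - i).val ↔
        BtwN (a - i).val (b - i).val (d - i).val)) := by
  have hab' : a.val ≠ b.val := fun hh => hab (Fin.ext hh)
  have hcd' : c.val ≠ d.val := fun hh => hcd (Fin.ext hh)
  have hac' : a.val ≠ c.val := fun hh => hac (Fin.ext hh)
  have had' : a.val ≠ d.val := fun hh => had (Fin.ext hh)
  have hbc' : b.val ≠ c.val := fun hh => hbc (Fin.ext hh)
  have hbd' : b.val ≠ d.val := fun hh => hbd (Fin.ext hh)
  have ha := a.is_lt; have hb := b.is_lt; have hc := c.is_lt; have hd := d.is_lt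
  have hi := i.is_lt
  rw [sub_val' m i a, sub_val' m i b, sub_val' m i c, sub_val' m i d]
  simp only [BtwN]
  split_ifs <;> omega

/-- The crossing criterion, in rotated (cyclic) coordinates around pivot `i`. -/
lemma crit_rot (h : ConvexCW m p) (i : Fin m) {a b c d : Fin m}
    (hab : a ≠ b) (hcd : c ≠ d)
    (hac : a ≠ c) (had : a ≠ d) (hbc : b ≠ c) (hbd : b ≠ d) :
    SegCross (p a) (p b) (p c) (p d) ↔
      ¬ (BtwN (a - i).val (b - i).val (c - i).val ↔
         BtwN (a - i).val (b - i).val (d - i).val) :=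
  (crit h hab hcd hac had hbc hbd).trans (btw_rot i hab hcd hac had hbc hbd)



open scoped Classical in
lemma crNum_eq (m : ℕ) (p : Fin m → ℝ × ℝ) (f : Fin m → Fin m) :
    crNum m p f = (Finset.univ.filter fun q : Fin m × Fin m =>
      q.1 < q.2 ∧ q.1 < f q.1 ∧ q.2 < f q.2 ∧
      SegCross (p q.1) (p (f q.1)) (p q.2) (p (f q.2))).card := by
  rw [crNum, Nat.card_eq_fintype_card, Fintype.card_subtype]

section Tables
variable {D A1 A2 u v : ℕ} (hD : 0 < D) (h1 : D < A2) (h2 : A2 < A1)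

include hD h1 h2 in
lemma tableOld : (BtwN 0 A1 D ↔ BtwN 0 A1 A2) := by simp only [BtwN]; omega

include hD h1 h2 in
lemma tableNew : ¬ (BtwN 0 A2 D ↔ BtwN 0 A2 A1) := by simp only [BtwN]; omega

include hD h1 h2 in
lemma tableMove :
    (¬ (BtwN 0 A1 u ↔ BtwN 0 A1 v) ∨ ¬ (BtwN D A2 u ↔ BtwN D A2 v)) →
    (¬ (BtwN 0 A2 u ↔ BtwN 0 A2 v) ∨ ¬ (BtwN D A1 u ↔ BtwN D A1 v)) := by
  simp only [BtwN]; omega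

include hD h1 h2 in
lemma tableBoth :
    (¬ (BtwN 0 A1 u ↔ BtwN 0 A1 v)) → (¬ (BtwN D A2 u ↔ BtwN D A2 v)) →
    (¬ (BtwN 0 A2 u ↔ BtwN 0 A2 v) ∧ ¬ (BtwN D A1 u ↔ BtwN D A1 v)) := by
  simp only [BtwN]; omega
end Tables

def sort2 {m : ℕ} (x y : Fin m) : Fin m × Fin m := if x < y then (x, y) else (y, x)

lemma sort2_eq {m : ℕ} {x y a b : Fin m} (h : sort2 x y = sort2 a b) :
    (x = a ∧ y = b) ∨ (x = b ∧ y = a) := by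
  unfold sort2 at h
  split_ifs at h <;> simp only [Prod.ext_iff] at h <;> tauto

lemma sort2_comp {m : ℕ} (x y : Fin m) : sort2 x y = (x, y) ∨ sort2 x y = (y, x) := by
  unfold sort2; split_ifs <;> simp


open Finset in
open scoped Classical in
lemma main_count (m : ℕ) (p : Fin m → ℝ × ℝ) (hconv : ConvexCW m p)
    (f g : Fin m → Fin m) (hf : Function.Involutive f)
    (i j : Fin m)
    (hij : i ≠ j) (hfii : f i ≠ i) (hfij : f i ≠ j) (hfji : f j ≠ i)
    (hfjj : f j ≠ j) (hfifj : f i ≠ f j)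
    (hgi : g i = f j) (hgj : g j = f i) (hgfi : g (f i) = j) (hgfj : g (f j) = i)
    (hgen : ∀ t, t ≠ i → t ≠ j → t ≠ f i → t ≠ f j → g t = f t)
    (hD : 0 < (j - i).val) (hDA2 : (j - i).val < (f j - i).val)
    (h21 : (f j - i).val < (f i - i).val) :
    crNum m p f < crNum m p g := by
  classical
  haveI : NeZero m := ⟨(Fin.pos i).ne'⟩
  have hWi : (i - i).val = 0 := by rw [sub_self, Fin.val_zero]
  set D := (j - i).val with hDdef
  set A2 := (f j - i).val with hA2def
  set A1 := (f i - i).val with hA1def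
  -- basic facts
  have hffi : f (f i) = i := hf i
  have hffj : f (f j) = j := hf j
  -- generic point facts
  have hts : ∀ t : Fin m, t ≠ i → t ≠ j → t ≠ f i → t ≠ f j →
      (f t ≠ i ∧ f t ≠ j ∧ f t ≠ f i ∧ f t ≠ f j ∧ g t = f t ∧ g (f t) = t) := by
    intro t h1 h2 h3 h4
    have e1 : f t ≠ i := fun h => h3 ((hf t).symm.trans (congrArg f h))
    have e2 : f t ≠ j := fun h => h4 ((hf t).symm.trans (congrArg f h))
    have e3 : f t ≠ f i := fun h => h1 (hf.injective h)
    have e4 : f t ≠ f j := fun h => h2 (hf.injective h)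
    exact ⟨e1, e2, e3, e4, hgen t h1 h2 h3 h4,
      (hgen (f t) e1 e2 e3 e4).trans (hf t)⟩
  -- canonical criterion instances
  have hcanA : ∀ t : Fin m, t ≠ i → t ≠ j → t ≠ f i → t ≠ f j → t ≠ f t →
      (SegCross (p i) (p (f i)) (p t) (p (f t)) ↔
        ¬ (BtwN 0 A1 (t - i).val ↔ BtwN 0 A1 (f t - i).val)) := by
    intro t h1 h2 h3 h4 h5
    obtain ⟨e1, e2, e3, e4, -, -⟩ := hts t h1 h2 h3 h4
    have := crit_rot hconv i (Ne.symm hfii) h5 (Ne.symm h1) (Ne.symm e1)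
      (Ne.symm h3) (Ne.symm e3)
    rwa [hWi] at this
  have hcanB : ∀ t : Fin m, t ≠ i → t ≠ j → t ≠ f i → t ≠ f j → t ≠ f t →
      (SegCross (p j) (p (f j)) (p t) (p (f t)) ↔
        ¬ (BtwN D A2 (t - i).val ↔ BtwN D A2 (f t - i).val)) := by
    intro t h1 h2 h3 h4 h5
    obtain ⟨e1, e2, e3, e4, -, -⟩ := hts t h1 h2 h3 h4
    exact crit_rot hconv i (Ne.symm hfjj) h5 (Ne.symm h2) (Ne.symm e2)
      (Ne.symm h4) (Ne.symm e4)
  have hcanA' : ∀ t : Fin m, t ≠ i → t ≠ j → t ≠ f i → t ≠ f j → t ≠ f t →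
      (SegCross (p i) (p (f j)) (p t) (p (f t)) ↔
        ¬ (BtwN 0 A2 (t - i).val ↔ BtwN 0 A2 (f t - i).val)) := by
    intro t h1 h2 h3 h4 h5
    obtain ⟨e1, e2, e3, e4, -, -⟩ := hts t h1 h2 h3 h4
    have := crit_rot hconv i (Ne.symm hfji) h5 (Ne.symm h1) (Ne.symm e1)
      (Ne.symm h4) (Ne.symm e4)
    rwa [hWi] at this
  have hcanB' : ∀ t : Fin m, t ≠ i → t ≠ j → t ≠ f i → t ≠ f j → t ≠ f t →
      (SegCross (p j) (p (f i)) (p t) (p (f t)) ↔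
        ¬ (BtwN D A1 (t - i).val ↔ BtwN D A1 (f t - i).val)) := by
    intro t h1 h2 h3 h4 h5
    obtain ⟨e1, e2, e3, e4, -, -⟩ := hts t h1 h2 h3 h4
    exact crit_rot hconv i (Ne.symm hfij) h5 (Ne.symm h2) (Ne.symm e2)
      (Ne.symm h3) (Ne.symm e3)
  -- the old pair does not cross, the new pair crosses
  have hABold : ¬ SegCross (p i) (p (f i)) (p j) (p (f j)) := by
    rw [crit_rot hconv i (Ne.symm hfii) (Ne.symm hfjj) hij (Ne.symm hfji)
      hfij hfifj, hWi]
    intro hc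
    exact hc (tableOld hD hDA2 h21)
  have hABnew : SegCross (p i) (p (f j)) (p j) (p (f i)) := by
    rw [crit_rot hconv i (Ne.symm hfji) (Ne.symm hfij) hij (Ne.symm hfii)
      hfjj (Ne.symm hfifj), hWi]
    exact tableNew hD hDA2 h21
  -- normalization of the first edge
  have hn1A : ∀ (x : Fin m) (C E : ℝ × ℝ), (x = i ∨ x = f i) →
      (SegCross (p x) (p (f x)) C E ↔ SegCross (p i) (p (f i)) C E) := by
    rintro x C E (rfl | rfl)
    · rfl
    · rw [hffi]; exact segCross_swap₁.symm
  have hn1B : ∀ (x : Fin m) (C E : ℝ × ℝ), (x = j ∨ x = f j) →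
      (SegCross (p x) (p (f x)) C E ↔ SegCross (p j) (p (f j)) C E) := by
    rintro x C E (rfl | rfl)
    · rfl
    · rw [hffj]; exact segCross_swap₁.symm
  have hn1A' : ∀ (x : Fin m) (C E : ℝ × ℝ), (x = i ∨ x = f j) →
      (SegCross (p x) (p (g x)) C E ↔ SegCross (p i) (p (f j)) C E) := by
    rintro x C E (rfl | rfl)
    · rw [hgi]
    · rw [hgfj]; exact segCross_swap₁.symm
  have hn1B' : ∀ (x : Fin m) (C E : ℝ × ℝ), (x = j ∨ x = f i) →
      (SegCross (p x) (p (g x)) C E ↔ SegCross (p j) (p (f i)) C E) := by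
    rintro x C E (rfl | rfl)
    · rw [hgj]
    · rw [hgfi]; exact segCross_swap₁.symm
  -- the g-representatives of the two new edges
  set rA : Fin m := if i < f j then i else f j with hrAdef
  set rB : Fin m := if j < f i then j else f i with hrBdef
  have hrA : (rA = i ∨ rA = f j) ∧ rA < g rA := by
    rw [hrAdef]; split_ifs with h
    · exact ⟨Or.inl rfl, by rwa [hgi]⟩
    · exact ⟨Or.inr rfl, by rw [hgfj]; exact (not_lt.mp h).lt_of_ne hfji⟩
  have hrB : (rB = j ∨ rB = f i) ∧ rB < g rB := by
    rw [hrBdef]; split_ifs with h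
    · exact ⟨Or.inl rfl, by rwa [hgj]⟩
    · exact ⟨Or.inr rfl, by rw [hgfi]; exact (not_lt.mp h).lt_of_ne hfij⟩
  have hrAS : rA = i ∨ rA = f j := hrA.1
  have hrBS : rB = j ∨ rB = f i := hrB.1
  have hrAB : rA ≠ rB := by
    rcases hrAS with h1 | h1 <;> rcases hrBS with h2 | h2 <;> rw [h1, h2]
    · exact hij
    · exact Ne.symm hfii
    · exact hfjj
    · exact Ne.symm hfifj
  -- second-pair normalizations
  have hn2A : ∀ (A B : ℝ × ℝ) (y : Fin m), (y = i ∨ y = f i) →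
      (SegCross A B (p y) (p (f y)) ↔ SegCross A B (p i) (p (f i))) := by
    rintro A B y (rfl | rfl)
    · rfl
    · rw [hffi]; exact segCross_swap₂.symm
  have hn2B : ∀ (A B : ℝ × ℝ) (y : Fin m), (y = j ∨ y = f j) →
      (SegCross A B (p y) (p (f y)) ↔ SegCross A B (p j) (p (f j))) := by
    rintro A B y (rfl | rfl)
    · rfl
    · rw [hffj]; exact segCross_swap₂.symm
  have hn2B' : ∀ (A B : ℝ × ℝ) (y : Fin m), (y = j ∨ y = f i) →
      (SegCross A B (p y) (p (g y)) ↔ SegCross A B (p j) (p (f i))) := by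
    rintro A B y (rfl | rfl)
    · rw [hgj]
    · rw [hgfi]; exact segCross_swap₂.symm
  -- the sets to compare
  rw [crNum_eq m p f, crNum_eq m p g]
  set F := (univ.filter fun q : Fin m × Fin m =>
      q.1 < q.2 ∧ q.1 < f q.1 ∧ q.2 < f q.2 ∧
      SegCross (p q.1) (p (f q.1)) (p q.2) (p (f q.2))) with hFdef
  set G := (univ.filter fun q : Fin m × Fin m =>
      q.1 < q.2 ∧ q.1 < g q.1 ∧ q.2 < g q.2 ∧
      SegCross (p q.1) (p (g q.1)) (p q.2) (p (g q.2))) with hGdef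
  set nA : Fin m → Fin m :=
    fun t => if SegCross (p i) (p (f j)) (p t) (p (f t)) then rA else rB with hnAdef
  set nB : Fin m → Fin m :=
    fun t => if SegCross (p j) (p (f i)) (p t) (p (f t)) then rB else rA with hnBdef
  set Φ : Fin m × Fin m → Fin m × Fin m := fun q =>
    if q.1 = i ∨ q.1 = f i then sort2 (nA q.2) q.2
    else if q.2 = i ∨ q.2 = f i then sort2 (nA q.1) q.1
    else if q.1 = j ∨ q.1 = f j then sort2 (nB q.2) q.2
    else if q.2 = j ∨ q.2 = f j then sort2 (nB q.1) q.1
    else q with hΦdef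
  have hGmem : ∀ x y : Fin m, x ≠ y → x < g x → y < g y →
      SegCross (p x) (p (g x)) (p y) (p (g y)) → sort2 x y ∈ G := by
    intro x y hxy hx hy hsc
    unfold sort2
    by_cases h : x < y
    · rw [if_pos h, hGdef]
      exact mem_filter.mpr ⟨mem_univ _, h, hx, hy, hsc⟩
    · rw [if_neg h, hGdef]
      exact mem_filter.mpr ⟨mem_univ _, lt_of_le_of_ne (not_lt.mp h) (Ne.symm hxy),
        hy, hx, segCross_comm.mp hsc⟩
  -- moving old crossings to new crossings
  have hmove : ∀ t : Fin m, t ≠ i → t ≠ j → t ≠ f i → t ≠ f j → t ≠ f t →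
      (SegCross (p i) (p (f i)) (p t) (p (f t)) ∨
       SegCross (p j) (p (f j)) (p t) (p (f t))) →
      (SegCross (p i) (p (f j)) (p t) (p (f t)) ∨
       SegCross (p j) (p (f i)) (p t) (p (f t))) := by
    intro t h1 h2 h3 h4 h5 hold
    rw [hcanA t h1 h2 h3 h4 h5, hcanB t h1 h2 h3 h4 h5] at hold
    rw [hcanA' t h1 h2 h3 h4 h5, hcanB' t h1 h2 h3 h4 h5]
    exact tableMove hD hDA2 h21 hold
  have hboth : ∀ t : Fin m, t ≠ i → t ≠ j → t ≠ f i → t ≠ f j → t ≠ f t →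
      SegCross (p i) (p (f i)) (p t) (p (f t)) →
      SegCross (p j) (p (f j)) (p t) (p (f t)) →
      (SegCross (p i) (p (f j)) (p t) (p (f t)) ∧
       SegCross (p j) (p (f i)) (p t) (p (f t))) := by
    intro t h1 h2 h3 h4 h5 hA hB
    rw [hcanA t h1 h2 h3 h4 h5] at hA
    rw [hcanB t h1 h2 h3 h4 h5] at hB
    rw [hcanA' t h1 h2 h3 h4 h5, hcanB' t h1 h2 h3 h4 h5]
    exact tableBoth hD hDA2 h21 hA hB
  have hnAcross : ∀ t : Fin m, t ≠ i → t ≠ j → t ≠ f i → t ≠ f j → t < f t →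
      SegCross (p i) (p (f i)) (p t) (p (f t)) →
      ((nA t = rA ∨ nA t = rB) ∧
       SegCross (p (nA t)) (p (g (nA t))) (p t) (p (g t))) := by
    intro t h1 h2 h3 h4 h5 hold
    obtain ⟨-, -, -, -, hgt, -⟩ := hts t h1 h2 h3 h4
    by_cases hA' : SegCross (p i) (p (f j)) (p t) (p (f t))
    · have he : nA t = rA := by simp only [hnAdef]; rw [if_pos hA']
      refine ⟨Or.inl he, ?_⟩
      rw [he, hgt, hn1A' rA _ _ hrAS]
      exact hA'
    · have he : nA t = rB := by simp only [hnAdef]; rw [if_neg hA']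
      have hB' : SegCross (p j) (p (f i)) (p t) (p (f t)) := by
        rcases hmove t h1 h2 h3 h4 (ne_of_lt h5) (Or.inl hold) with h | h
        · exact absurd h hA'
        · exact h
      refine ⟨Or.inr he, ?_⟩
      rw [he, hgt, hn1B' rB _ _ hrBS]
      exact hB'
  have hnBcross : ∀ t : Fin m, t ≠ i → t ≠ j → t ≠ f i → t ≠ f j → t < f t →
      SegCross (p j) (p (f j)) (p t) (p (f t)) →
      ((nB t = rA ∨ nB t = rB) ∧
       SegCross (p (nB t)) (p (g (nB t))) (p t) (p (g t))) := by
    intro t h1 h2 h3 h4 h5 hold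
    obtain ⟨-, -, -, -, hgt, -⟩ := hts t h1 h2 h3 h4
    by_cases hB' : SegCross (p j) (p (f i)) (p t) (p (f t))
    · have he : nB t = rB := by simp only [hnBdef]; rw [if_pos hB']
      refine ⟨Or.inr he, ?_⟩
      rw [he, hgt, hn1B' rB _ _ hrBS]
      exact hB'
    · have he : nB t = rA := by simp only [hnBdef]; rw [if_neg hB']
      have hA' : SegCross (p i) (p (f j)) (p t) (p (f t)) := by
        rcases hmove t h1 h2 h3 h4 (ne_of_lt h5) (Or.inr hold) with h | h
        · exact h
        · exact absurd h hB'
      refine ⟨Or.inl he, ?_⟩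
      rw [he, hgt, hn1A' rA _ _ hrAS]
      exact hA'
  -- structure of members of F
  have hstruct : ∀ q : Fin m × Fin m, q ∈ F →
      (((q.1 = i ∨ q.1 = f i) ∧
        (q.2 ≠ i ∧ q.2 ≠ j ∧ q.2 ≠ f i ∧ q.2 ≠ f j ∧ q.2 < f q.2) ∧
        SegCross (p i) (p (f i)) (p q.2) (p (f q.2)) ∧ Φ q = sort2 (nA q.2) q.2) ∨
       ((q.2 = i ∨ q.2 = f i) ∧
        (q.1 ≠ i ∧ q.1 ≠ j ∧ q.1 ≠ f i ∧ q.1 ≠ f j ∧ q.1 < f q.1) ∧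
        SegCross (p i) (p (f i)) (p q.1) (p (f q.1)) ∧ Φ q = sort2 (nA q.1) q.1) ∨
       ((q.1 = j ∨ q.1 = f j) ∧
        (q.2 ≠ i ∧ q.2 ≠ j ∧ q.2 ≠ f i ∧ q.2 ≠ f j ∧ q.2 < f q.2) ∧
        SegCross (p j) (p (f j)) (p q.2) (p (f q.2)) ∧ Φ q = sort2 (nB q.2) q.2) ∨
       ((q.2 = j ∨ q.2 = f j) ∧
        (q.1 ≠ i ∧ q.1 ≠ j ∧ q.1 ≠ f i ∧ q.1 ≠ f j ∧ q.1 < f q.1) ∧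
        SegCross (p j) (p (f j)) (p q.1) (p (f q.1)) ∧ Φ q = sort2 (nB q.1) q.1) ∨
       ((q.1 ≠ i ∧ q.1 ≠ j ∧ q.1 ≠ f i ∧ q.1 ≠ f j ∧ q.1 < f q.1) ∧
        (q.2 ≠ i ∧ q.2 ≠ j ∧ q.2 ≠ f i ∧ q.2 ≠ f j ∧ q.2 < f q.2) ∧ Φ q = q)) := by
    intro q hq
    rw [hFdef, mem_filter] at hq
    obtain ⟨-, h12, h1, h2, hsc⟩ := hq
    have hne12 : q.1 ≠ q.2 := ne_of_lt h12
    have h21' : q.2 ≠ f q.1 := by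
      intro h
      have e : f q.2 = q.1 := by rw [h, hf q.1]
      rw [e] at h2
      exact lt_asymm h12 h2
    have h12' : q.1 ≠ f q.2 := by
      intro h
      rw [← h] at h2
      exact lt_asymm h12 h2
    by_cases c1A : q.1 = i ∨ q.1 = f i
    · -- q.1 on edge A
      left
      have hscA : SegCross (p i) (p (f i)) (p q.2) (p (f q.2)) :=
        (hn1A q.1 _ _ c1A).mp hsc
      have c2nA : q.2 ≠ i ∧ q.2 ≠ f i := by
        refine ⟨fun h => ?_, fun h => ?_⟩
        · rcases c1A with h' | h'
          · exact hne12 (h'.trans h.symm)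
          · exact h21' (by rw [h', hffi]; exact h)
        · rcases c1A with h' | h'
          · exact h21' (by rw [h']; exact h)
          · exact hne12 (h'.trans h.symm)
      have c2nB : q.2 ≠ j ∧ q.2 ≠ f j := by
        by_contra hcon
        rw [not_and_or, not_not, not_not] at hcon
        have hcon' : q.2 = j ∨ q.2 = f j := hcon
        have : SegCross (p i) (p (f i)) (p j) (p (f j)) :=
          (hn2B _ _ q.2 hcon').mp hscA
        exact hABold this
      refine ⟨c1A, ⟨c2nA.1, c2nB.1, c2nA.2, c2nB.2, h2⟩, hscA, ?_⟩
      simp only [hΦdef]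
      rw [if_pos c1A]
    · by_cases c1B : q.1 = j ∨ q.1 = f j
      · -- q.1 on edge B
        have hscB : SegCross (p j) (p (f j)) (p q.2) (p (f q.2)) :=
          (hn1B q.1 _ _ c1B).mp hsc
        have c2nB : q.2 ≠ j ∧ q.2 ≠ f j := by
          refine ⟨fun h => ?_, fun h => ?_⟩
          · rcases c1B with h' | h'
            · exact hne12 (h'.trans h.symm)
            · exact h21' (by rw [h', hffj]; exact h)
          · rcases c1B with h' | h'
            · exact h21' (by rw [h']; exact h)
            · exact hne12 (h'.trans h.symm)
        have c2nA : q.2 ≠ i ∧ q.2 ≠ f i := by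
          by_contra hcon
          rw [not_and_or, not_not, not_not] at hcon
          have hcon' : q.2 = i ∨ q.2 = f i := hcon
          have : SegCross (p j) (p (f j)) (p i) (p (f i)) :=
            (hn2A _ _ q.2 hcon').mp hscB
          exact hABold (segCross_comm.mp this)
        right; right; left
        refine ⟨c1B, ⟨c2nA.1, c2nB.1, c2nA.2, c2nB.2, h2⟩, hscB, ?_⟩
        simp only [hΦdef]
        rw [if_neg c1A]
        have c2A : ¬ (q.2 = i ∨ q.2 = f i) := by
          rw [not_or]; exact c2nA
        rw [if_neg c2A, if_pos c1B]
      · -- q.1 generic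
        have c1gen : q.1 ≠ i ∧ q.1 ≠ j ∧ q.1 ≠ f i ∧ q.1 ≠ f j := by
          rw [not_or] at c1A c1B
          exact ⟨c1A.1, c1B.1, c1A.2, c1B.2⟩
        by_cases c2A : q.2 = i ∨ q.2 = f i
        · -- q.2 on edge A
          right; left
          have hscA : SegCross (p i) (p (f i)) (p q.1) (p (f q.1)) :=
            (hn1A q.2 _ _ c2A).mp (segCross_comm.mp hsc)
          refine ⟨c2A, ⟨c1gen.1, c1gen.2.1, c1gen.2.2.1, c1gen.2.2.2, h1⟩, hscA, ?_⟩
          simp only [hΦdef]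
          rw [if_neg c1A, if_pos c2A]
        · by_cases c2B : q.2 = j ∨ q.2 = f j
          · -- q.2 on edge B
            right; right; right; left
            have hscB : SegCross (p j) (p (f j)) (p q.1) (p (f q.1)) :=
              (hn1B q.2 _ _ c2B).mp (segCross_comm.mp hsc)
            refine ⟨c2B, ⟨c1gen.1, c1gen.2.1, c1gen.2.2.1, c1gen.2.2.2, h1⟩, hscB, ?_⟩
            simp only [hΦdef]
            rw [if_neg c1A, if_neg c2A, if_neg c1B, if_pos c2B]
          · -- both generic
            right; right; right; right
            have c2gen : q.2 ≠ i ∧ q.2 ≠ j ∧ q.2 ≠ f i ∧ q.2 ≠ f j := by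
              rw [not_or] at c2A c2B
              exact ⟨c2A.1, c2B.1, c2A.2, c2B.2⟩
            refine ⟨⟨c1gen.1, c1gen.2.1, c1gen.2.2.1, c1gen.2.2.2, h1⟩,
              ⟨c2gen.1, c2gen.2.1, c2gen.2.2.1, c2gen.2.2.2, h2⟩, ?_⟩
            simp only [hΦdef]
            rw [if_neg c1A, if_neg c2A, if_neg c1B, if_neg c2B]
  -- uniqueness of representatives
  have hAuniq : ∀ x y : Fin m, (x = i ∨ x = f i) → (y = i ∨ y = f i) →
      x < f x → y < f y → x = y := by
    rintro x y (rfl | rfl) (rfl | rfl) hx hy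
    · rfl
    · rw [hffi] at hy; exact absurd hx (lt_asymm hy)
    · rw [hffi] at hx; exact absurd hy (lt_asymm hx)
    · rfl
  have hBuniq : ∀ x y : Fin m, (x = j ∨ x = f j) → (y = j ∨ y = f j) →
      x < f x → y < f y → x = y := by
    rintro x y (rfl | rfl) (rfl | rfl) hx hy
    · rfl
    · rw [hffj] at hy; exact absurd hx (lt_asymm hy)
    · rw [hffj] at hx; exact absurd hy (lt_asymm hx)
    · rfl
  have hS4n : ∀ s : Fin m, (s = rA ∨ s = rB) →
      ∀ t : Fin m, t ≠ i → t ≠ j → t ≠ f i → t ≠ f j → s ≠ t := by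
    rintro s (rfl | rfl) t t1 t2 t3 t4
    · rcases hrAS with h | h <;> rw [h]
      · exact Ne.symm t1
      · exact Ne.symm t4
    · rcases hrBS with h | h <;> rw [h]
      · exact Ne.symm t2
      · exact Ne.symm t3
  -- the key membership lemma
  have hkey : ∀ t r : Fin m, t ≠ i → t ≠ j → t ≠ f i → t ≠ f j → t < f t →
      (r = rA ∨ r = rB) → SegCross (p r) (p (g r)) (p t) (p (g t)) →
      sort2 r t ∈ G.erase (sort2 rA rB) := by
    intro t r t1 t2 t3 t4 t5 hr hcr
    have hgt : g t = f t := (hts t t1 t2 t3 t4).2.2.2.2.1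
    have htgt : t < g t := by rw [hgt]; exact t5
    have hne : r ≠ t := hS4n r hr t t1 t2 t3 t4
    have hrlt : r < g r := by
      rcases hr with h | h <;> rw [h]
      · exact hrA.2
      · exact hrB.2
    refine mem_erase.mpr ⟨?_, hGmem r t hne hrlt htgt hcr⟩
    intro h
    rcases sort2_eq h with ⟨-, h2⟩ | ⟨-, h2⟩
    · exact hS4n rB (Or.inr rfl) t t1 t2 t3 t4 h2.symm
    · exact hS4n rA (Or.inl rfl) t t1 t2 t3 t4 h2.symm
  -- extra element
  have hextra : sort2 rA rB ∈ G := by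
    apply hGmem rA rB hrAB hrA.2 hrB.2
    rw [hn1A' rA _ _ hrAS, hn2B' _ _ rB hrBS]
    exact hABnew
  -- image is in G minus the extra element
  have himg : ∀ q ∈ F, Φ q ∈ G.erase (sort2 rA rB) := by
    intro q hq
    rcases hstruct q hq with ⟨hA, ⟨t1, t2, t3, t4, t5⟩, hsc, hΦ⟩ |
      ⟨hA, ⟨t1, t2, t3, t4, t5⟩, hsc, hΦ⟩ | ⟨hB, ⟨t1, t2, t3, t4, t5⟩, hsc, hΦ⟩ |
      ⟨hB, ⟨t1, t2, t3, t4, t5⟩, hsc, hΦ⟩ |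
      ⟨⟨s1, s2, s3, s4, s5⟩, ⟨t1, t2, t3, t4, t5⟩, hΦ⟩
    · obtain ⟨hor, hcr⟩ := hnAcross q.2 t1 t2 t3 t4 t5 hsc
      rw [hΦ]; exact hkey q.2 (nA q.2) t1 t2 t3 t4 t5 hor hcr
    · obtain ⟨hor, hcr⟩ := hnAcross q.1 t1 t2 t3 t4 t5 hsc
      rw [hΦ]; exact hkey q.1 (nA q.1) t1 t2 t3 t4 t5 hor hcr
    · obtain ⟨hor, hcr⟩ := hnBcross q.2 t1 t2 t3 t4 t5 hsc
      rw [hΦ]; exact hkey q.2 (nB q.2) t1 t2 t3 t4 t5 hor hcr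
    · obtain ⟨hor, hcr⟩ := hnBcross q.1 t1 t2 t3 t4 t5 hsc
      rw [hΦ]; exact hkey q.1 (nB q.1) t1 t2 t3 t4 t5 hor hcr
    · rw [hΦ]
      rw [hFdef, mem_filter] at hq
      obtain ⟨-, h12, h1, h2, hsc⟩ := hq
      have hg1 : g q.1 = f q.1 := (hts q.1 s1 s2 s3 s4).2.2.2.2.1
      have hg2 : g q.2 = f q.2 := (hts q.2 t1 t2 t3 t4).2.2.2.2.1
      refine mem_erase.mpr ⟨?_, ?_⟩
      · intro h
        rcases sort2_comp rA rB with h' | h' <;> rw [h'] at h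
        · exact hS4n rA (Or.inl rfl) q.1 s1 s2 s3 s4 (congrArg Prod.fst h).symm
        · exact hS4n rB (Or.inr rfl) q.1 s1 s2 s3 s4 (congrArg Prod.fst h).symm
      · rw [hGdef, mem_filter]
        refine ⟨mem_univ _, h12, ?_, ?_, ?_⟩
        · rw [hg1]; exact h1
        · rw [hg2]; exact h2
        · rw [hg1, hg2]; exact hsc
  -- kind classification
  have hkind : ∀ q : Fin m × Fin m, q ∈ F →
      ((∃ x t : Fin m, (x = i ∨ x = f i) ∧ x < f x ∧
         (t ≠ i ∧ t ≠ j ∧ t ≠ f i ∧ t ≠ f j ∧ t < f t) ∧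
         SegCross (p i) (p (f i)) (p t) (p (f t)) ∧ Φ q = sort2 (nA t) t ∧
         ((q.1 = x ∧ q.2 = t) ∨ (q.1 = t ∧ q.2 = x))) ∨
       (∃ x t : Fin m, (x = j ∨ x = f j) ∧ x < f x ∧
         (t ≠ i ∧ t ≠ j ∧ t ≠ f i ∧ t ≠ f j ∧ t < f t) ∧
         SegCross (p j) (p (f j)) (p t) (p (f t)) ∧ Φ q = sort2 (nB t) t ∧
         ((q.1 = x ∧ q.2 = t) ∨ (q.1 = t ∧ q.2 = x))) ∨
       ((q.1 ≠ i ∧ q.1 ≠ j ∧ q.1 ≠ f i ∧ q.1 ≠ f j) ∧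
        (q.2 ≠ i ∧ q.2 ≠ j ∧ q.2 ≠ f i ∧ q.2 ≠ f j) ∧ Φ q = q)) := by
    intro q hq
    have hq' := hq
    rw [hFdef, mem_filter] at hq'
    obtain ⟨-, h12, h1, h2, -⟩ := hq'
    rcases hstruct q hq with ⟨hA, hgen, hsc, hΦ⟩ | ⟨hA, hgen, hsc, hΦ⟩ |
      ⟨hB, hgen, hsc, hΦ⟩ | ⟨hB, hgen, hsc, hΦ⟩ | ⟨hgen1, hgen2, hΦ⟩
    · exact Or.inl ⟨q.1, q.2, hA, h1, hgen, hsc, hΦ, Or.inl ⟨rfl, rfl⟩⟩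
    · exact Or.inl ⟨q.2, q.1, hA, h2, hgen, hsc, hΦ, Or.inr ⟨rfl, rfl⟩⟩
    · exact Or.inr (Or.inl ⟨q.1, q.2, hB, h1, hgen, hsc, hΦ, Or.inl ⟨rfl, rfl⟩⟩)
    · exact Or.inr (Or.inl ⟨q.2, q.1, hB, h2, hgen, hsc, hΦ, Or.inr ⟨rfl, rfl⟩⟩)
    · exact Or.inr (Or.inr ⟨⟨hgen1.1, hgen1.2.1, hgen1.2.2.1, hgen1.2.2.2.1⟩,
        ⟨hgen2.1, hgen2.2.1, hgen2.2.2.1, hgen2.2.2.2.1⟩, hΦ⟩)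
  -- injectivity on F
  have hinj : Set.InjOn Φ ↑F := by
    intro q hqS q' hqS' heq
    have hq : q ∈ F := hqS
    have hq' : q' ∈ F := hqS'
    obtain ⟨-, o1, -, -, -⟩ := mem_filter.mp (hFdef ▸ hq)
    obtain ⟨-, o1', -, -, -⟩ := mem_filter.mp (hFdef ▸ hq')
    -- helper to dispatch "generic vs sorted-special" contradictions
    have hdispatch : ∀ (r t : Fin m) (w : Fin m × Fin m), (r = rA ∨ r = rB) →
        w = sort2 r t →
        (w.1 ≠ i ∧ w.1 ≠ j ∧ w.1 ≠ f i ∧ w.1 ≠ f j) →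
        (w.2 ≠ i ∧ w.2 ≠ j ∧ w.2 ≠ f i ∧ w.2 ≠ f j) → False := by
      intro r t w hr hw hw1 hw2
      rcases sort2_comp r t with h' | h' <;> rw [h'] at hw
      · exact hS4n r hr w.1 hw1.1 hw1.2.1 hw1.2.2.1 hw1.2.2.2
          (congrArg Prod.fst hw).symm
      · exact hS4n r hr w.2 hw2.1 hw2.2.1 hw2.2.2.1 hw2.2.2.2
          (congrArg Prod.snd hw).symm
    rcases hkind q hq with ⟨x, t, hx, hxf, ⟨t1, t2, t3, t4, t5⟩, hsc, hΦ, hor⟩ |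
        ⟨x, t, hx, hxf, ⟨t1, t2, t3, t4, t5⟩, hsc, hΦ, hor⟩ |
        ⟨hg1, hg2, hΦ⟩ <;>
      rcases hkind q' hq' with ⟨x', t', hx', hxf', ⟨u1, u2, u3, u4, u5⟩, hsc', hΦ', hor'⟩ |
        ⟨x', t', hx', hxf', ⟨u1, u2, u3, u4, u5⟩, hsc', hΦ', hor'⟩ |
        ⟨hg1', hg2', hΦ'⟩
    -- (A, A)
    · have heq' : sort2 (nA t) t = sort2 (nA t') t' := by rw [← hΦ, ← hΦ', heq]
      rcases sort2_eq heq' with ⟨-, htt⟩ | ⟨hxt, -⟩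
      · subst htt
        have hxeq : x = x' := hAuniq x x' hx hx' hxf hxf'
        subst hxeq
        rcases hor with ⟨e1, e2⟩ | ⟨e1, e2⟩ <;> rcases hor' with ⟨e1', e2'⟩ | ⟨e1', e2'⟩
        · exact Prod.ext (e1.trans e1'.symm) (e2.trans e2'.symm)
        · exfalso
          rw [e1, e2] at o1
          rw [e1', e2'] at o1'
          exact absurd o1 (lt_asymm o1')
        · exfalso
          rw [e1, e2] at o1
          rw [e1', e2'] at o1'
          exact absurd o1 (lt_asymm o1')
        · exact Prod.ext (e1.trans e1'.symm) (e2.trans e2'.symm)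
      · exact absurd hxt (hS4n (nA t) (hnAcross t t1 t2 t3 t4 t5 hsc).1 t' u1 u2 u3 u4)
    -- (A, B)
    · exfalso
      have heq' : sort2 (nA t) t = sort2 (nB t') t' := by rw [← hΦ, ← hΦ', heq]
      rcases sort2_eq heq' with ⟨hnn, htt⟩ | ⟨hxt, -⟩
      · subst htt
        obtain ⟨cA', cB'⟩ := hboth t t1 t2 t3 t4 (ne_of_lt t5) hsc hsc'
        have e1 : nA t = rA := by simp only [hnAdef]; rw [if_pos cA']
        have e2 : nB t = rB := by simp only [hnBdef]; rw [if_pos cB']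
        rw [e1, e2] at hnn
        exact hrAB hnn
      · exact hS4n (nA t) (hnAcross t t1 t2 t3 t4 t5 hsc).1 t' u1 u2 u3 u4 hxt
    -- (A, gen)
    · exfalso
      have hw : q' = sort2 (nA t) t := by rw [← hΦ', ← heq, hΦ]
      exact hdispatch (nA t) t q' (hnAcross t t1 t2 t3 t4 t5 hsc).1 hw hg1' hg2'
    -- (B, A)
    · exfalso
      have heq' : sort2 (nB t) t = sort2 (nA t') t' := by rw [← hΦ, ← hΦ', heq]
      rcases sort2_eq heq' with ⟨hnn, htt⟩ | ⟨hxt, -⟩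
      · subst htt
        obtain ⟨cA', cB'⟩ := hboth t t1 t2 t3 t4 (ne_of_lt t5) hsc' hsc
        have e1 : nA t = rA := by simp only [hnAdef]; rw [if_pos cA']
        have e2 : nB t = rB := by simp only [hnBdef]; rw [if_pos cB']
        rw [e1, e2] at hnn
        exact hrAB hnn.symm
      · exact hS4n (nB t) (hnBcross t t1 t2 t3 t4 t5 hsc).1 t' u1 u2 u3 u4 hxt
    -- (B, B)
    · have heq' : sort2 (nB t) t = sort2 (nB t') t' := by rw [← hΦ, ← hΦ', heq]
      rcases sort2_eq heq' with ⟨-, htt⟩ | ⟨hxt, -⟩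
      · subst htt
        have hxeq : x = x' := hBuniq x x' hx hx' hxf hxf'
        subst hxeq
        rcases hor with ⟨e1, e2⟩ | ⟨e1, e2⟩ <;> rcases hor' with ⟨e1', e2'⟩ | ⟨e1', e2'⟩
        · exact Prod.ext (e1.trans e1'.symm) (e2.trans e2'.symm)
        · exfalso
          rw [e1, e2] at o1
          rw [e1', e2'] at o1'
          exact absurd o1 (lt_asymm o1')
        · exfalso
          rw [e1, e2] at o1
          rw [e1', e2'] at o1'
          exact absurd o1 (lt_asymm o1')
        · exact Prod.ext (e1.trans e1'.symm) (e2.trans e2'.symm)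
      · exact absurd hxt (hS4n (nB t) (hnBcross t t1 t2 t3 t4 t5 hsc).1 t' u1 u2 u3 u4)
    -- (B, gen)
    · exfalso
      have hw : q' = sort2 (nB t) t := by rw [← hΦ', ← heq, hΦ]
      exact hdispatch (nB t) t q' (hnBcross t t1 t2 t3 t4 t5 hsc).1 hw hg1' hg2'
    -- (gen, A)
    · exfalso
      have hw : q = sort2 (nA t') t' := by rw [← hΦ, heq, hΦ']
      exact hdispatch (nA t') t' q (hnAcross t' u1 u2 u3 u4 u5 hsc').1 hw hg1 hg2
    -- (gen, B)
    · exfalso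
      have hw : q = sort2 (nB t') t' := by rw [← hΦ, heq, hΦ']
      exact hdispatch (nB t') t' q (hnBcross t' u1 u2 u3 u4 u5 hsc').1 hw hg1 hg2
    -- (gen, gen)
    · rw [← hΦ, ← hΦ', heq]
  -- conclusion
  have himg' : F.image Φ ⊆ G.erase (sort2 rA rB) := by
    intro r hr
    obtain ⟨q, hq, rfl⟩ := mem_image.mp hr
    exact himg q hq
  calc F.card = (F.image Φ).card := (card_image_of_injOn hinj).symm
    _ ≤ (G.erase (sort2 rA rB)).card := card_le_card himg'
    _ < G.card := card_erase_lt_of_mem hextra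

end S3

open S3 in
/-- In a max-crossing bichromatic perfect matching on a 4-block colored
bichromatic convex point set, the matching edges emanating from any single block
pairwise cross. -/
theorem stmt3 (n : ℕ) (p : Fin (2 * n) → ℝ × ℝ) (c : Fin (2 * n) → Bool)
    (hconv : ConvexCW (2 * n) p) (hcol : Bichrom n c) (hblock : FourBlock n c)
    (f : Fin (2 * n) → Fin (2 * n)) (hM : IsBPM (2 * n) c f)
    (hmax : ∀ g : Fin (2 * n) → Fin (2 * n), IsBPM (2 * n) c g →
      crNum (2 * n) p g ≤ crNum (2 * n) p f) :
    ∀ i j : Fin (2 * n), i ≠ j → SameBlockArc (2 * n) c i j →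
      SegCross (p i) (p (f i)) (p j) (p (f j)) := by
  obtain ⟨finv, fnf, fcol⟩ := hM
  intro i j hij hblk
  haveI : NeZero (2 * n) := ⟨(Fin.pos i).ne'⟩
  obtain ⟨d, hjd, hdc⟩ := hblk
  have hcj : c j = c i := by rw [hjd]; exact hdc d le_rfl
  have hfii : f i ≠ i := fnf i
  have hfjj : f j ≠ j := fnf j
  have hfij : f i ≠ j := fun h => fcol i (by rw [h]; exact hcj)
  have hfji : f j ≠ i := fun h => fcol j (by rw [h]; exact hcj.symm)
  have hfifj : f i ≠ f j := fun h => hij (finv.injective h)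
  have hwi : ((i - i : Fin (2 * n))).val = 0 := by rw [sub_self]; rfl
  have hwj : ((j - i : Fin (2 * n))).val = d.val := by rw [hjd, add_sub_cancel_left]
  have key : ∀ x : Fin (2 * n), c x ≠ c i → d.val < ((x - i : Fin (2 * n))).val := by
    intro x hx
    by_contra hle
    push_neg at hle
    have he : i + (x - i) = x := by rw [add_comm, sub_add_cancel]
    have := hdc (x - i) (Fin.le_def.mpr hle)
    rw [he] at this
    exact hx this
  have hd0 : 0 < d.val := by
    rcases Nat.eq_zero_or_pos d.val with h | h
    · exfalso
      have : d = 0 := Fin.ext (by rw [h]; rfl)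
      rw [this, add_zero] at hjd
      exact hij hjd.symm
    · exact h
  have hA1 : d.val < ((f i - i : Fin (2 * n))).val := key (f i) (fcol i)
  have hA2 : d.val < ((f j - i : Fin (2 * n))).val :=
    key (f j) (fun h => fcol j (h.trans hcj.symm))
  have hne12 : ((f i - i : Fin (2 * n))).val ≠ ((f j - i : Fin (2 * n))).val :=
    fun h => hfifj (sub_left_injective (Fin.ext h))
  rcases lt_or_gt_of_ne hne12 with hlt | hgt
  · -- the two edges cross
    rw [crit_rot hconv i (Ne.symm hfii) (Ne.symm hfjj) hij (Ne.symm hfji) hfij hfifj,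
      hwi, hwj]
    simp only [BtwN]
    omega
  · -- exchange argument: contradiction with maximality
    exfalso
    set g : Fin (2 * n) → Fin (2 * n) := fun x =>
      if x = i then f j else if x = j then f i else
      if x = f i then j else if x = f j then i else f x with hgdef
    have hgi : g i = f j := by simp only [hgdef]; simp
    have hgj : g j = f i := by
      simp only [hgdef]; rw [if_neg (Ne.symm hij)]; simp
    have hgfi : g (f i) = j := by
      simp only [hgdef]; rw [if_neg hfii, if_neg hfij]; simp
    have hgfj : g (f j) = i := by
      simp only [hgdef]
      rw [if_neg hfji, if_neg hfjj, if_neg (Ne.symm hfifj)]; simp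
    have hgen : ∀ t, t ≠ i → t ≠ j → t ≠ f i → t ≠ f j → g t = f t := by
      intro t h1 h2 h3 h4
      simp only [hgdef]
      rw [if_neg h1, if_neg h2, if_neg h3, if_neg h4]
    have hBPMg : IsBPM (2 * n) c g := by
      refine ⟨?_, ?_, ?_⟩
      · intro x
        by_cases e1 : x = i
        · subst e1; rw [hgi, hgfj]
        by_cases e2 : x = j
        · subst e2; rw [hgj, hgfi]
        by_cases e3 : x = f i
        · subst e3; rw [hgfi, hgj]
        by_cases e4 : x = f j
        · subst e4; rw [hgfj, hgi]
        · have k1 : f x ≠ i := fun h => e3 ((finv x).symm.trans (congrArg f h))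
          have k2 : f x ≠ j := fun h => e4 ((finv x).symm.trans (congrArg f h))
          have k3 : f x ≠ f i := fun h => e1 (finv.injective h)
          have k4 : f x ≠ f j := fun h => e2 (finv.injective h)
          rw [hgen x e1 e2 e3 e4, hgen (f x) k1 k2 k3 k4, finv x]
      · intro x
        by_cases e1 : x = i
        · subst e1; rw [hgi]; exact hfji
        by_cases e2 : x = j
        · subst e2; rw [hgj]; exact hfij
        by_cases e3 : x = f i
        · subst e3; rw [hgfi]; exact fun h => hfij h.symm
        by_cases e4 : x = f j
        · subst e4; rw [hgfj]; exact fun h => hfji h.symm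
        · rw [hgen x e1 e2 e3 e4]; exact fnf x
      · intro x
        by_cases e1 : x = i
        · subst e1; rw [hgi]; exact fun h => fcol j (h.trans hcj.symm)
        by_cases e2 : x = j
        · subst e2; rw [hgj]; exact fun h => fcol i (h.trans hcj)
        by_cases e3 : x = f i
        · subst e3; rw [hgfi]; exact fun h => fcol i (h.symm.trans hcj)
        by_cases e4 : x = f j
        · subst e4; rw [hgfj]; exact fun h => fcol j (h.symm.trans hcj.symm)
        · rw [hgen x e1 e2 e3 e4]; exact fcol x
    have hlt' := main_count (2 * n) p hconv f g finv i j hij hfii hfij hfji hfjj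
      hfifj hgi hgj hgfi hgfj hgen (by rw [hwj]; exact hd0) (by rw [hwj]; exact hA2) hgt
    exact absurd (hmax g hBPMg) (not_le.mpr hlt')
end

section
/- Let n be even and let P be a bichromatic convex point set with n red and n blue points whose coloring is alternating. Then every straight-line bichromatic perfect matching M on P satisfies cr(M) ≤ n(n−2)/2. -/
open Finset

/-- signed area-ish function -/
def sig' (A B x : ℝ × ℝ) : ℝ :=
  (B.1 - A.1) * (x.2 - A.2) - (B.2 - A.2) * (x.1 - A.1)

lemma sig_comb (A B u v : ℝ × ℝ) (s t : ℝ) (hst : s + t = 1) :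
    sig' A B (s • u + t • v) = s * sig' A B u + t * sig' A B v := by
  have ht : t = 1 - s := by linarith
  subst ht
  simp only [sig', Prod.smul_fst, Prod.smul_snd, Prod.fst_add, Prod.snd_add, smul_eq_mul]
  ring

lemma sig_swap (A B C : ℝ × ℝ) : sig' A C B = - sig' A B C := by
  simp only [sig']; ring

lemma not_segCross_of_same_side (A B C D : ℝ × ℝ)
    (h : (0 < sig' A B C ∧ 0 < sig' A B D) ∨ (sig' A B C < 0 ∧ sig' A B D < 0)) :
    ¬ SegCross A B C D := by
  rintro ⟨x, hx1, hx2⟩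
  rw [openSegment] at hx1 hx2
  obtain ⟨s, t, hs, ht, hst, rfl⟩ := hx1
  obtain ⟨s', t', hs', ht', hst', hx⟩ := hx2
  have h1 : sig' A B (s • A + t • B) = 0 := by
    rw [sig_comb A B A B s t hst]
    simp only [sig']; ring_nf
  have h2 : sig' A B (s' • C + t' • D) = s' * sig' A B C + t' * sig' A B D :=
    sig_comb A B C D s' t' hst'
  rw [hx] at h2
  rw [h1] at h2
  rcases h with ⟨hc, hd⟩ | ⟨hc, hd⟩ <;> nlinarith

lemma alt_parity {n : ℕ} (hn0 : 0 < n) (c : Fin (2 * n) → Bool)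
    (halt : Alternating (2 * n) c) :
    ∀ i : Fin (2 * n), c i = (if (i : ℕ) % 2 = 0 then c ⟨0, by omega⟩ else !c ⟨0, by omega⟩) := by
  have key : ∀ k : ℕ, ∀ hk : k < 2 * n,
      c ⟨k, hk⟩ = (if k % 2 = 0 then c ⟨0, by omega⟩ else !c ⟨0, by omega⟩) := by
    intro k
    induction k with
    | zero => intro hk; simp
    | succ k ih =>
      intro hk
      have hk' : k < 2 * n := by omega
      have hne := halt ⟨k, hk'⟩ ⟨k + 1, hk⟩ (by simp [Nat.mod_eq_of_lt hk])
      have hih := ih hk'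
      rcases Nat.mod_two_eq_zero_or_one k with h2 | h2
      · have h3 : (k + 1) % 2 = 1 := by omega
        simp only [h2, if_pos rfl] at hih
        simp only [h3, if_neg (by omega : ¬(1:ℕ) = 0)]
        rw [hih] at hne
        revert hne; cases c ⟨0, by omega⟩ <;> cases c ⟨k+1, hk⟩ <;> simp
      · have h3 : (k + 1) % 2 = 0 := by omega
        simp only [h2, if_neg (by omega : ¬(1:ℕ) = 0)] at hih
        simp only [h3, if_pos rfl]
        rw [hih] at hne
        revert hne; cases c ⟨0, by omega⟩ <;> cases c ⟨k+1, hk⟩ <;> simp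
  intro i
  have := key (i : ℕ) i.isLt
  simpa using this

lemma f_parity {n : ℕ} (hn0 : 0 < n) (c : Fin (2 * n) → Bool)
    (halt : Alternating (2 * n) c) (f : Fin (2 * n) → Fin (2 * n))
    (hcolf : ∀ i, c (f i) ≠ c i) :
    ∀ i : Fin (2 * n), ((f i : ℕ)) % 2 ≠ (i : ℕ) % 2 := by
  intro i hpar
  have h1 := alt_parity hn0 c halt i
  have h2 := alt_parity hn0 c halt (f i)
  rw [hpar] at h2
  exact hcolf i (h2.trans h1.symm)

lemma card_E {m : ℕ} (f : Fin m → Fin m) (hinv : Function.Involutive f)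
    (hfix : ∀ i, f i ≠ i) :
    2 * (univ.filter fun i => i < f i).card = m := by
  have hbij : (univ.filter fun i => i < f i).card
      = (univ.filter fun i => ¬ i < f i).card := by
    apply Finset.card_bij (fun i _ => f i)
    · intro a ha
      simp only [mem_filter, mem_univ, true_and] at ha ⊢
      rw [hinv a]
      exact not_lt_of_gt ha
    · intro a ha b hb hab
      exact hinv.injective hab
    · intro b hb
      simp only [mem_filter, mem_univ, true_and] at hb ⊢
      refine ⟨f b, ?_, hinv b⟩
      rw [hinv b]
      rcases lt_trichotomy (f b) b with h | h | h
      · exact h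
      · exact absurd h (hfix b)
      · exact absurd h hb
  have h2 := Finset.card_filter_add_card_filter_not
    (s := (univ : Finset (Fin m))) (p := fun i => i < f i)
  rw [← hbij] at h2
  simp only [Finset.card_univ, Fintype.card_fin] at h2
  omega

lemma pairs_card {m : ℕ} (E : Finset (Fin m)) :
    2 * (E.offDiag.filter fun q => q.1 < q.2).card = E.card * E.card - E.card := by
  have hbij : (E.offDiag.filter fun q => q.1 < q.2).card
      = (E.offDiag.filter fun q => ¬ q.1 < q.2).card := by
    apply Finset.card_bij (fun q _ => (q.2, q.1))
    · intro a ha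
      simp only [mem_filter, Finset.mem_offDiag] at ha ⊢
      exact ⟨⟨ha.1.2.1, ha.1.1, (Ne.symm ha.1.2.2)⟩, not_lt_of_gt ha.2⟩
    · intro a ha b hb hab
      exact Prod.ext (congrArg Prod.snd hab) (congrArg Prod.fst hab)
    · intro b hb
      simp only [mem_filter, Finset.mem_offDiag] at hb ⊢
      refine ⟨(b.2, b.1), ⟨⟨hb.1.2.1, hb.1.1, Ne.symm hb.1.2.2⟩, ?_⟩, rfl⟩
      rcases lt_trichotomy b.2 b.1 with h | h | h
      · exact h
      · exact absurd h.symm hb.1.2.2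
      · exact absurd h hb.2
  have h2 := Finset.card_filter_add_card_filter_not
    (s := E.offDiag) (p := fun q => q.1 < q.2)
  rw [← hbij, Finset.offDiag_card] at h2
  omega

lemma partner {n : ℕ} (hn2 : n % 2 = 0)
    (f : Fin (2*n) → Fin (2*n)) (hinv : Function.Involutive f)
    (hfix : ∀ i, f i ≠ i) (hpar : ∀ i, ((f i : ℕ)) % 2 ≠ (i : ℕ) % 2)
    (i : Fin (2*n)) (hi : i < f i) :
    ∃ j : Fin (2*n), j < f j ∧ j ≠ i ∧
      ((i < j ∧ ¬ (j < f i ∧ f i < f j)) ∨ (j < i ∧ ¬ (i < f j ∧ f j < f i))) := by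
  by_contra hcon
  push_neg at hcon
  -- hcon : ∀ j, j < f j → j ≠ i → (i < j → j < f i ∧ f i < f j) ∧ (j < i → i < f j ∧ f j < f i)
  have key : ∀ k : Fin (2*n), k ≠ i → k ≠ f i →
      ((i < k ∧ k < f i) ↔ ¬ (i < f k ∧ f k < f i)) := by
    intro k hki hkfi
    have hfk_ne_i : f k ≠ i := by
      intro h
      exact hkfi (by rw [← hinv k, h])
    have hfk_ne_fi : f k ≠ f i := fun h => hki (hinv.injective h)
    by_cases h : k < f k
    · have h1 := hcon k h hki
      rcases lt_trichotomy i k with hik | hik | hik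
      · obtain ⟨h2, h3⟩ := h1.1 hik
        constructor
        · rintro - ⟨-, h4⟩
          exact absurd h4 (lt_asymm h3)
        · intro _
          exact ⟨hik, h2⟩
      · exact absurd hik.symm hki
      · obtain ⟨h2, h3⟩ := h1.2 hik
        constructor
        · rintro ⟨h4, -⟩
          exact absurd h4 (lt_asymm hik)
        · intro hr
          exact absurd ⟨h2, h3⟩ hr
    · have hfk : f k < k := lt_of_le_of_ne (not_lt.mp h) (hfix k)
      have hffk : f k < f (f k) := by rw [hinv k]; exact hfk
      have h1 := hcon (f k) hffk hfk_ne_i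
      rw [hinv k] at h1
      rcases lt_trichotomy i (f k) with hik | hik | hik
      · obtain ⟨h2, h3⟩ := h1.1 hik
        constructor
        · rintro ⟨-, h4⟩
          exact absurd h4 (lt_asymm h3)
        · intro hr
          exact absurd ⟨hik, h2⟩ hr
      · exact absurd hik.symm hfk_ne_i
      · obtain ⟨h2, h3⟩ := h1.2 hik
        constructor
        · rintro - ⟨h4, -⟩
          exact absurd h4 (lt_asymm hik)
        · intro _
          exact ⟨h2, h3⟩
  -- bijection between Ioo i (f i) and its complement minus endpoints
  set S : Finset (Fin (2*n)) := Finset.Ioo i (f i) with hS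
  set T : Finset (Fin (2*n)) := insert i (insert (f i) S) with hT
  have hfi_notS : f i ∉ S := by simp [hS]
  have hi_notS : i ∉ S := by simp [hS]
  have hifi : i ≠ f i := ne_of_lt hi
  have hcardT : T.card = S.card + 2 := by
    rw [hT, Finset.card_insert_of_notMem (by simp [hifi, hi_notS]),
      Finset.card_insert_of_notMem hfi_notS]
  have hSS' : S.card = (univ \ T).card := by
    apply Finset.card_bij' (fun k _ => f k) (fun k _ => f k)
    · intro a ha
      rw [hS, Finset.mem_Ioo] at ha
      have hai : a ≠ i := ne_of_gt ha.1
      have hafi : a ≠ f i := ne_of_lt ha.2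
      have hfa_notIoo : ¬ (i < f a ∧ f a < f i) := (key a hai hafi).mp ha
      simp only [Finset.mem_sdiff, Finset.mem_univ, hT, Finset.mem_insert, true_and,
        hS, Finset.mem_Ioo]
      push_neg
      refine ⟨?_, ?_, ?_⟩
      · intro h; exact hafi (by rw [← hinv a, h])
      · intro h; exact hai (hinv.injective h)
      · intro h1; exact le_of_not_gt (fun h2 => hfa_notIoo ⟨h1, h2⟩)
    · intro b hb
      simp only [Finset.mem_sdiff, Finset.mem_univ, hT, Finset.mem_insert, true_and,
        hS, Finset.mem_Ioo] at hb
      push_neg at hb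
      obtain ⟨hbi, hbfi, hbIoo⟩ := hb
      have : i < f b ∧ f b < f i := by
        by_contra hq
        obtain ⟨u, v⟩ := (key b hbi hbfi).mpr hq
        exact absurd v (not_lt.mpr (hbIoo u))
      rw [hS, Finset.mem_Ioo]
      exact this
    · intro a _; exact hinv a
    · intro a _; exact hinv a
  have hcard_sdiff : (univ \ T).card = 2 * n - T.card :=
    by rw [Finset.card_sdiff_of_subset (Finset.subset_univ T)]; simp
  have hcardS : S.card = (f i : ℕ) - (i : ℕ) - 1 := by rw [hS, Fin.card_Ioo]
  have hlt : (i : ℕ) < (f i : ℕ) := hi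
  have hltn : ((f i : ℕ)) < 2 * n := (f i).isLt
  have hp := hpar i
  omega

/-- For even `n` and an alternately colored bichromatic convex point set,
every bichromatic perfect matching has at most `n(n−2)/2` crossings. -/
theorem stmt8 (n : ℕ) (hn : Even n)
    (p : Fin (2 * n) → ℝ × ℝ) (c : Fin (2 * n) → Bool)
    (hconv : ConvexCW (2 * n) p) (hcol : Bichrom n c) (halt : Alternating (2 * n) c) :
    ∀ f : Fin (2 * n) → Fin (2 * n), IsBPM (2 * n) c f →
      crNum (2 * n) p f ≤ n * (n - 2) / 2 := by
  intro f hf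
  obtain ⟨hinv, hfix, hcolf⟩ := hf
  rcases Nat.eq_zero_or_pos n with hn0 | hn0
  · subst hn0
    haveI : IsEmpty {q : Fin (2*0) × Fin (2*0) // q.1 < q.2 ∧ q.1 < f q.1 ∧ q.2 < f q.2 ∧
        SegCross (p q.1) (p (f q.1)) (p q.2) (p (f q.2))} := ⟨fun z => z.1.1.elim0⟩
    unfold crNum
    rw [Nat.card_of_isEmpty]
  have hn2 : n % 2 = 0 := Nat.even_iff.mp hn
  have hpar := f_parity hn0 c halt f hcolf
  have hcv := hconv.2
  have hEcard := card_E f hinv hfix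
  set E : Finset (Fin (2*n)) := univ.filter (fun i => i < f i) with hE
  set Pairs : Finset (Fin (2*n) × Fin (2*n)) := E.offDiag.filter (fun q => q.1 < q.2)
    with hPairs
  set X : Finset (Fin (2*n) × Fin (2*n)) :=
    Pairs.filter (fun q => q.2 < f q.1 ∧ f q.1 < f q.2) with hX
  set NC : Finset (Fin (2*n) × Fin (2*n)) :=
    Pairs.filter (fun q => ¬ (q.2 < f q.1 ∧ f q.1 < f q.2)) with hNC
  have hXNC : X.card + NC.card = Pairs.card :=
    Finset.card_filter_add_card_filter_not (s := Pairs)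
      (p := fun q => q.2 < f q.1 ∧ f q.1 < f q.2)
  have hPc : 2 * Pairs.card = E.card * E.card - E.card := pairs_card E
  have hEn : E.card = n := by omega
  -- crossing pairs are interleaved pairs
  have hsub : ∀ q : Fin (2*n) × Fin (2*n),
      (q.1 < q.2 ∧ q.1 < f q.1 ∧ q.2 < f q.2 ∧
        SegCross (p q.1) (p (f q.1)) (p q.2) (p (f q.2))) → q ∈ X := by
    rintro ⟨a, b⟩ ⟨hab, haf, hbf, hcross⟩
    have hfa_ne_b : f a ≠ b := by
      intro h
      rw [← h, hinv a] at hbf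
      exact absurd (hbf.trans haf) (lt_irrefl _)
    have hfa_ne_fb : f a ≠ f b := fun h => (ne_of_lt hab) (hinv.injective h)
    have hcv' : ∀ u v w : Fin (2*n), u < v → v < w → sig' (p u) (p v) (p w) < 0 := by
      intro u v w h1 h2
      exact hcv u v w h1 h2
    have hbfa : b < f a := by
      by_contra hc
      have hlt : f a < b := lt_of_le_of_ne (not_lt.mp hc) hfa_ne_b
      -- disjoint: a < f a < b < f b
      refine not_segCross_of_same_side (p a) (p (f a)) (p b) (p (f b)) ?_ hcross
      exact Or.inr ⟨hcv' a (f a) b haf hlt, hcv' a (f a) (f b) haf (hlt.trans hbf)⟩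
    have hfafb : f a < f b := by
      by_contra hc
      have hlt : f b < f a := lt_of_le_of_ne (not_lt.mp hc) (Ne.symm hfa_ne_fb)
      -- nested: a < b < f b < f a
      refine not_segCross_of_same_side (p a) (p (f a)) (p b) (p (f b)) ?_ hcross
      refine Or.inl ⟨?_, ?_⟩
      · have := hcv' a b (f a) hab hbfa
        rw [sig_swap] at this
        linarith
      · have := hcv' a (f b) (f a) (hab.trans hbf) hlt
        rw [sig_swap] at this
        linarith
    rw [hX, Finset.mem_filter, hPairs, Finset.mem_filter, Finset.mem_offDiag]
    refine ⟨⟨⟨?_, ?_, ne_of_lt hab⟩, hab⟩, hbfa, hfafb⟩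
    · rw [hE, Finset.mem_filter]; exact ⟨Finset.mem_univ _, haf⟩
    · rw [hE, Finset.mem_filter]; exact ⟨Finset.mem_univ _, hbf⟩
  have h1 : crNum (2*n) p f ≤ X.card := by
    unfold crNum
    calc Nat.card {q : Fin (2*n) × Fin (2*n) // q.1 < q.2 ∧ q.1 < f q.1 ∧ q.2 < f q.2 ∧
          SegCross (p q.1) (p (f q.1)) (p q.2) (p (f q.2))}
        ≤ Nat.card {q : Fin (2*n) × Fin (2*n) // q ∈ X} := by
          apply Nat.card_le_card_of_injective (fun z => ⟨z.1, hsub z.1 z.2⟩)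
          intro z w h
          simp only [Subtype.mk.injEq] at h
          exact Subtype.ext h
      _ = X.card := by rw [Nat.card_eq_fintype_card, Fintype.card_coe]
  -- each edge has a noncrossing partner
  have hpartner : ∀ i ∈ E, ∃ j : Fin (2*n), j < f j ∧ j ≠ i ∧
      ((i < j ∧ ¬ (j < f i ∧ f i < f j)) ∨ (j < i ∧ ¬ (i < f j ∧ f j < f i))) := by
    intro i hiE
    rw [hE, Finset.mem_filter] at hiE
    exact partner hn2 f hinv hfix hpar i hiE.2
  choose! jf hj1 hj2 hj3 using hpartner
  classical
  set g : Fin (2*n) → Fin (2*n) × Fin (2*n) :=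
    fun i => if i < jf i then (i, jf i) else (jf i, i) with hg
  have hjE : ∀ i ∈ E, jf i ∈ E := by
    intro i hiE
    rw [hE, Finset.mem_filter]
    exact ⟨Finset.mem_univ _, hj1 i hiE⟩
  have himg : ∀ i ∈ E, g i ∈ NC := by
    intro i hiE
    rcases hj3 i hiE with ⟨hij, hXn⟩ | ⟨hji, hYn⟩
    · have : g i = (i, jf i) := by rw [hg]; simp [hij]
      rw [this, hNC, Finset.mem_filter, hPairs, Finset.mem_filter, Finset.mem_offDiag]
      exact ⟨⟨⟨hiE, hjE i hiE, ne_of_lt hij⟩, hij⟩, hXn⟩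
    · have : g i = (jf i, i) := by rw [hg]; simp [not_lt_of_gt hji]
      rw [this, hNC, Finset.mem_filter, hPairs, Finset.mem_filter, Finset.mem_offDiag]
      exact ⟨⟨⟨hjE i hiE, hiE, ne_of_lt hji⟩, hji⟩, hYn⟩
  have hfib : ∀ b ∈ E.image g, (E.filter fun a => g a = b).card ≤ 2 := by
    intro b _
    have hss : (E.filter fun a => g a = b) ⊆ {b.1, b.2} := by
      intro a ha
      rw [Finset.mem_filter] at ha
      have hga := ha.2
      simp only [hg] at hga
      simp only [Finset.mem_insert, Finset.mem_singleton]
      by_cases hc : a < jf a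
      · rw [if_pos hc] at hga
        left; rw [← hga]
      · rw [if_neg hc] at hga
        right; rw [← hga]
    calc (E.filter fun a => g a = b).card ≤ ({b.1, b.2} : Finset _).card :=
          Finset.card_le_card hss
      _ ≤ 2 := (Finset.card_insert_le _ _).trans (by simp)
  have hcmi := Finset.card_le_mul_card_image (f := g) E 2 hfib
  have himg2 : E.image g ⊆ NC := by
    intro b hb
    rw [Finset.mem_image] at hb
    obtain ⟨a, ha, rfl⟩ := hb
    exact himg a ha
  have h2 : n ≤ 2 * NC.card := by
    calc n = E.card := hEn.symm
      _ ≤ 2 * (E.image g).card := hcmi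
      _ ≤ 2 * NC.card := by
          exact Nat.mul_le_mul_left 2 (Finset.card_le_card himg2)
  -- final arithmetic
  rw [hEn] at hPc
  have hnn : n ≤ n * n := Nat.le_mul_of_pos_left n hn0
  have hmulsub : n * (n - 2) = n * n - 2 * n := by
    rw [Nat.mul_sub]; ring_nf
  rw [Nat.le_div_iff_mul_le (by norm_num : (0:ℕ) < 2), hmulsub]
  obtain ⟨N, hNN⟩ : ∃ N, n * n = N := ⟨_, rfl⟩
  rw [hNN] at hPc hnn ⊢
  omega
end
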